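/- arXiv:2205.04401 — 4 statements merged into one kernel-verified Lean document; each statement's English description precedes it below -/
import Mathlib

section
/- Let f : [−1, 1] → ℝ, let ρ > 1 and C > 0, and suppose that for every integer n ≥ 0 there exists a polynomial qₙ of degree at most n with real coefficients such that sup_{x ∈ [−1,1]} |f(x) − qₙ(x)| ≤ C·ρ^{−n}. Then f can be analytically continued to E_ρ; that is, there exists a function F : ℂ → ℂ that is complex-differentiable at every point of E_ρ and satisfies F(x) = f(x) for all x ∈ [−1, 1]. -/
open Set Polynomial Filter

lemma growth_outside (g : Polynomial ℂ) (d : ℕ) (hd : g.natDegree ≤ d) (M : ℝ)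
    (hM : ∀ w : ℂ, ‖w‖ = 1 → ‖g.eval w‖ ≤ M) :
    ∀ u : ℂ, 1 ≤ ‖u‖ → ‖g.eval u‖ ≤ M * ‖u‖ ^ d := by
  have key : ∀ w : ℂ, w ≠ 0 → (g.reflect d).eval w⁻¹ * w ^ d = g.eval w := by
    intro w hw
    have : Invertible w := invertibleOfNonzero hw
    have h := Polynomial.eval₂_reflect_mul_pow (RingHom.id ℂ) w d g hd
    rw [invOf_eq_inv] at h
    simpa [Polynomial.eval₂_id] using h
  have hrefl : ∀ w : ℂ, ‖w‖ = 1 → ‖(g.reflect d).eval w‖ ≤ M := by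
    intro w hw
    have hw0 : w ≠ 0 := by
      intro h; rw [h] at hw; simp at hw
    have h1 := key w⁻¹ (inv_ne_zero hw0)
    rw [inv_inv] at h1
    have habs : ‖(g.reflect d).eval w‖ * (‖w‖)⁻¹ ^ d
        = ‖g.eval w⁻¹‖ := by
      rw [← h1, norm_mul, norm_pow, norm_inv]
    rw [hw] at habs
    simp only [inv_one, one_pow, mul_one] at habs
    rw [habs]
    exact hM w⁻¹ (by rw [norm_inv, hw, inv_one])
  have hball : ∀ v : ℂ, ‖v‖ ≤ 1 → ‖(g.reflect d).eval v‖ ≤ M := by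
    intro v hv
    refine Complex.norm_le_of_forall_mem_frontier_norm_le (U := Metric.ball (0:ℂ) 1) (C := M)
      Metric.isBounded_ball ((g.reflect d).differentiable.diffContOnCl)
      (fun z hz => ?_) (z := v) ?_
    · rw [frontier_ball (0:ℂ) one_ne_zero] at hz
      exact hrefl z (by simpa [Complex.dist_eq] using hz)
    · rw [closure_ball (0:ℂ) one_ne_zero]
      simpa [Complex.dist_eq] using hv
  intro u hu
  have hu0 : u ≠ 0 := by
    intro h; rw [h] at hu; simp at hu; linarith
  have h1 := key u hu0
  calc ‖g.eval u‖ = ‖(g.reflect d).eval u⁻¹‖ * ‖u‖ ^ d := by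
        rw [← h1, norm_mul, norm_pow]
    _ ≤ M * ‖u‖ ^ d := by
        apply mul_le_mul_of_nonneg_right _ (by positivity)
        exact hball u⁻¹ (by rw [norm_inv]; exact inv_le_one_of_one_le₀ hu)

lemma bernstein_growth (p : Polynomial ℝ) (n : ℕ) (hn : p.natDegree ≤ n) (M : ℝ)
    (hM : ∀ x ∈ Icc (-1:ℝ) 1, |p.eval x| ≤ M) (r : ℝ) (hr : 1 ≤ r) :
    ∀ w : ℂ, 1 ≤ ‖w‖ → ‖w‖ ≤ r →
      ‖(p.map (algebraMap ℝ ℂ)).eval ((w + w⁻¹)/2)‖ ≤ M * r ^ n := by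
  set P := p.map (algebraMap ℝ ℂ) with hP
  have hPdeg : P.natDegree ≤ n := Polynomial.natDegree_map_le.trans hn
  set g : Polynomial ℂ := ∑ k ∈ Finset.range (n+1),
      Polynomial.C (P.coeff k) * X ^ (n - k) * ((X ^ 2 + 1) * Polynomial.C (2⁻¹ : ℂ)) ^ k with hg
  have hgdeg : g.natDegree ≤ 2 * n := by
    apply Polynomial.natDegree_sum_le_of_forall_le
    intro k hk
    have hk' : k ≤ n := Nat.lt_succ_iff.mp (Finset.mem_range.mp hk)
    have h1 : ((X ^ 2 + 1 : Polynomial ℂ) * Polynomial.C (2⁻¹ : ℂ)).natDegree ≤ 2 := by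
      apply Polynomial.natDegree_mul_le.trans
      simp only [Polynomial.natDegree_C, add_zero]
      apply (Polynomial.natDegree_add_le _ _).trans
      simp
    apply Polynomial.natDegree_mul_le.trans
    have h2 : (Polynomial.C (P.coeff k) * X ^ (n - k)).natDegree ≤ n - k := by
      apply (Polynomial.natDegree_C_mul_le _ _).trans
      simp
    have h3 : (((X ^ 2 + 1 : Polynomial ℂ) * Polynomial.C (2⁻¹ : ℂ)) ^ k).natDegree ≤ 2 * k := by
      apply (Polynomial.natDegree_pow_le).trans
      calc k * ((X ^ 2 + 1 : Polynomial ℂ) * Polynomial.C (2⁻¹ : ℂ)).natDegree ≤ k * 2 :=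
        Nat.mul_le_mul_left k h1
      _ = 2 * k := by ring
    omega
  have hgeval : ∀ w : ℂ, w ≠ 0 → g.eval w = w ^ n * P.eval ((w + w⁻¹)/2) := by
    intro w hw
    rw [hg, Polynomial.eval_finset_sum,
      Polynomial.eval_eq_sum_range' (Nat.lt_succ_of_le hPdeg), Finset.mul_sum]
    apply Finset.sum_congr rfl
    intro k hk
    have hk' : k ≤ n := Nat.lt_succ_iff.mp (Finset.mem_range.mp hk)
    simp only [Polynomial.eval_mul, Polynomial.eval_pow, Polynomial.eval_add,
      Polynomial.eval_one, Polynomial.eval_C, Polynomial.eval_X]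
    have key : (w ^ 2 + 1) * (2⁻¹ : ℂ) = w * ((w + w⁻¹)/2) := by
      field_simp
    rw [key, mul_pow,
      show P.coeff k * w ^ (n - k) * (w ^ k * ((w + w⁻¹)/2) ^ k)
        = (w ^ (n-k) * w ^ k) * (P.coeff k * ((w+w⁻¹)/2)^k) by ring,
      pow_sub_mul_pow w hk']
  have hcirc : ∀ w : ℂ, ‖w‖ = 1 → ‖g.eval w‖ ≤ M := by
    intro w hw
    have hw0 : w ≠ 0 := by intro h; rw [h] at hw; simp at hw
    have hinv : w⁻¹ = (starRingEnd ℂ) w := by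
      rw [Complex.inv_def, Complex.normSq_eq_norm_sq, hw]
      simp
    have hre : (w + w⁻¹)/2 = ((w.re : ℝ) : ℂ) := by
      rw [hinv, Complex.add_conj]
      push_cast
      ring
    have hPev : P.eval ((w.re : ℝ) : ℂ) = ((p.eval w.re : ℝ) : ℂ) := by
      rw [hP, ← Complex.coe_algebraMap, Polynomial.eval_map, Polynomial.eval₂_at_apply,
        Complex.coe_algebraMap]
    rw [hgeval w hw0, hre, hPev, norm_mul, norm_pow, hw, one_pow, one_mul, Complex.norm_real, Real.norm_eq_abs]
    apply hM
    constructor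
    · have := Complex.abs_re_le_norm w; rw [hw] at this; linarith [abs_le.mp this]
    · have := Complex.abs_re_le_norm w; rw [hw] at this; linarith [abs_le.mp this]
  intro w h1 hr2
  have hw0 : w ≠ 0 := by intro h; rw [h] at h1; simp at h1; linarith
  have hM0 : 0 ≤ M := le_trans (abs_nonneg _) (hM 0 (by norm_num))
  have hA := growth_outside g (2*n) hgdeg M hcirc w h1
  rw [hgeval w hw0, norm_mul, norm_pow] at hA
  have hwpos : (0:ℝ) < ‖w‖ ^ n := pow_pos (lt_of_lt_of_le one_pos h1) n
  have h2 : ‖w‖ ^ n * ‖P.eval ((w + w⁻¹)/2)‖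
      ≤ ‖w‖ ^ n * (M * ‖w‖ ^ n) := by
    calc ‖w‖ ^ n * ‖P.eval ((w + w⁻¹)/2)‖ ≤ M * ‖w‖ ^ (2*n) := hA
    _ = ‖w‖ ^ n * (M * ‖w‖ ^ n) := by rw [two_mul, pow_add]; ring
  have h3 := le_of_mul_le_mul_left h2 hwpos
  exact h3.trans (mul_le_mul_of_nonneg_left
    (pow_le_pow_left₀ (norm_nonneg w) hr2 n) hM0)


open Set

/-- The open Bernstein ellipse with parameter `ρ`: the set
`{(z + z⁻¹)/2 : z ∈ ℂ, 1 ≤ |z| < ρ}` in the complex plane. -/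
def bernsteinEllipse (ρ : ℝ) : Set ℂ :=
  {w : ℂ | ∃ z : ℂ, 1 ≤ ‖z‖ ∧ ‖z‖ < ρ ∧ w = (z + z⁻¹) / 2}

/-- **Theorem.** If `f : [−1,1] → ℝ` admits, for every `n ≥ 0`, a polynomial
approximation of degree at most `n` with uniform error at most `C·ρ^{−n}` (`ρ > 1`,
`C > 0`), then `f` can be analytically continued to the Bernstein ellipse `E_ρ`. -/
theorem analyticContinuation_of_geometric_polynomial_approx
    (f : ℝ → ℝ) (ρ C : ℝ) (hρ : 1 < ρ) (hC : 0 < C)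
    (happrox : ∀ n : ℕ, ∃ q : Polynomial ℝ, q.degree ≤ n ∧
      ∀ x ∈ Icc (-1 : ℝ) 1, |f x - q.eval x| ≤ C * ρ ^ (-(n : ℤ))) :
    ∃ F : ℂ → ℂ, (∀ z ∈ bernsteinEllipse ρ, DifferentiableAt ℂ F z) ∧
      ∀ x ∈ Icc (-1 : ℝ) 1, F (x : ℂ) = (f x : ℂ) := by
  choose q hqdeg hqapprox using happrox
  have hρ0 : 0 < ρ := lt_trans one_pos hρ
  set s : ℝ := ρ⁻¹ with hs
  have hs0 : 0 < s := inv_pos.mpr hρ0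
  have hs1 : s < 1 := by rw [hs]; exact inv_lt_one_of_one_lt₀ hρ
  have hpow : ∀ n : ℕ, ρ ^ (-(n:ℤ)) = s ^ n := by
    intro n; rw [zpow_neg, zpow_natCast, hs, inv_pow]
  set d : ℕ → Polynomial ℝ :=
    fun n => Nat.rec (motive := fun _ => Polynomial ℝ) (q 0) (fun m _ => q (m+1) - q m) n with hd
  have hd0 : d 0 = q 0 := rfl
  have hdS : ∀ n, d (n+1) = q (n+1) - q n := fun n => rfl
  have hqnat : ∀ n, (q n).natDegree ≤ n :=
    fun n => Polynomial.natDegree_le_iff_degree_le.mpr (hqdeg n)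
  have hddeg : ∀ n, (d n).natDegree ≤ n := by
    intro n
    cases n with
    | zero => exact hqnat 0
    | succ m =>
      rw [hdS]
      apply (Polynomial.natDegree_sub_le _ _).trans
      have := hqnat (m+1); have := hqnat m
      omega
  obtain ⟨C0, hC0⟩ := (isCompact_Icc (a := (-1:ℝ)) (b := 1)).exists_bound_of_continuousOn
    ((q 0).continuous_aeval.continuousOn)
  set b : ℕ → ℝ :=
    fun n => Nat.rec (motive := fun _ => ℝ) C0 (fun m _ => 2 * C * s ^ m) n with hb
  have hb0 : b 0 = C0 := rfl
  have hbS : ∀ n, b (n+1) = 2 * C * s ^ n := fun n => rfl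
  have hbd : ∀ n, ∀ x ∈ Icc (-1:ℝ) 1, |(d n).eval x| ≤ b n := by
    intro n x hx
    cases n with
    | zero => simpa [hd0, hb0, Real.norm_eq_abs] using hC0 x hx
    | succ m =>
      have h1 := hqapprox (m+1) x hx
      have h2 := hqapprox m x hx
      rw [hpow] at h1 h2
      have hss : s ^ (m+1) ≤ s ^ m := pow_le_pow_of_le_one hs0.le hs1.le (Nat.le_succ m)
      rw [hdS, hbS]
      calc |(q (m+1) - q m).eval x|
          = |(f x - (q m).eval x) - (f x - (q (m+1)).eval x)| := by
            rw [Polynomial.eval_sub]; ring_nf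
        _ ≤ |f x - (q m).eval x| + |f x - (q (m+1)).eval x| := abs_sub _ _
        _ ≤ C * s ^ m + C * s ^ (m+1) := add_le_add h2 h1
        _ ≤ 2 * C * s ^ m := by nlinarith
  set P : ℕ → Polynomial ℂ := fun n => (d n).map (algebraMap ℝ ℂ) with hPdef
  set F : ℂ → ℂ := fun z => ∑' n, (P n).eval z with hF
  have hUbound : ∀ r : ℝ, 1 ≤ r → ∀ n, ∀ w : ℂ, 1 ≤ ‖w‖ → ‖w‖ ≤ r →
      ‖(P n).eval ((w + w⁻¹)/2)‖ ≤ b n * r ^ n :=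
    fun r hr n w h1 h2 => bernstein_growth (d n) n (hddeg n) (b n) (hbd n) r hr w h1 h2
  have hsummable : ∀ r : ℝ, 0 < r → r < ρ → Summable (fun n => b n * r ^ n) := by
    intro r hr0 hrρ
    rw [← summable_nat_add_iff 1]
    have heq : (fun n : ℕ => b (n+1) * r ^ (n+1)) = fun n => (2*C*r) * (s*r)^n := by
      funext n; rw [hbS, mul_pow]; ring
    rw [heq]
    apply Summable.mul_left
    apply summable_geometric_of_lt_one (by positivity)
    calc s * r < s * ρ := by exact mul_lt_mul_of_pos_left hrρ hs0
      _ = 1 := by rw [hs]; exact inv_mul_cancel₀ (ne_of_gt hρ0)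
  have hevmap : ∀ (pp : Polynomial ℝ) (y : ℝ),
      (pp.map (algebraMap ℝ ℂ)).eval (y:ℂ) = ((pp.eval y : ℝ):ℂ) := by
    intro pp y
    rw [← Complex.coe_algebraMap, Polynomial.eval_map, Polynomial.eval₂_at_apply,
      Complex.coe_algebraMap]
  refine ⟨F, ?_, ?_⟩
  · rintro z₀ ⟨w₀, hw₀1, hw₀ρ, rfl⟩
    set r : ℝ := (‖w₀‖ + ρ)/2 with hr
    have hr1 : 1 < r := by rw [hr]; linarith
    have hrw : ‖w₀‖ < r := by rw [hr]; linarith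
    have hrρ : r < ρ := by rw [hr]; linarith
    set J : ℂ → ℂ := fun w => (w + w⁻¹)/2 with hJ
    set W : Set ℂ := {w : ℂ | r⁻¹ < ‖w‖} ∩ {w : ℂ | ‖w‖ < r} with hW
    have hWopen : IsOpen W :=
      IsOpen.inter (isOpen_lt continuous_const continuous_norm)
        (isOpen_lt continuous_norm continuous_const)
    have hw₀W : w₀ ∈ W := ⟨lt_of_lt_of_le (inv_lt_one_of_one_lt₀ hr1) hw₀1, hrw⟩
    have hw₀0 : w₀ ≠ 0 := by
      intro h; rw [h] at hw₀1; simp at hw₀1; linarith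
    have hJan : ∀ w : ℂ, w ≠ 0 → AnalyticAt ℂ J w := fun w hw =>
      ((analyticAt_id.add (analyticAt_id.inv hw)).div analyticAt_const two_ne_zero)
    have hnc : ¬ (∀ᶠ w in nhds w₀, J w = J w₀) := by
      intro hev
      have hconn : IsPreconnected ({(0:ℂ)}ᶜ : Set ℂ) :=
        (isConnected_compl_singleton_of_one_lt_rank
          (by simp [Complex.rank_real_complex]) (0:ℂ)).isPreconnected
      have hJan' : AnalyticOnNhd ℂ J ({(0:ℂ)}ᶜ : Set ℂ) := fun w hw => hJan w hw
      have heq := hJan'.eqOn_of_preconnected_of_eventuallyEq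
        (analyticOnNhd_const (v := J w₀)) hconn
        (show w₀ ∈ ({(0:ℂ)}ᶜ : Set ℂ) from hw₀0) hev
      have h1 : J 1 = J w₀ := heq (show (1:ℂ) ∈ _ by simp)
      have h2 : J 2 = J w₀ := heq (show (2:ℂ) ∈ _ by simp)
      rw [← h1] at h2
      rw [hJ] at h2
      norm_num at h2
    have hopen := (hJan w₀ hw₀0).eventually_constant_or_nhds_le_map_nhds.resolve_left hnc
    have hmem : J '' W ∈ nhds (J w₀) := hopen (Filter.image_mem_map (hWopen.mem_nhds hw₀W))
    have hz₀V : J w₀ ∈ interior (J '' W) := mem_interior_iff_mem_nhds.mpr hmem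
    have hVsub : ∀ z ∈ interior (J '' W),
        ∃ w : ℂ, 1 ≤ ‖w‖ ∧ ‖w‖ ≤ r ∧ z = (w + w⁻¹)/2 := by
      intro z hz
      obtain ⟨w, hwW, rfl⟩ := interior_subset hz
      have hwpos : 0 < ‖w‖ := lt_trans (inv_pos.mpr (by linarith)) hwW.1
      have hwne : w ≠ 0 := by
        intro h; rw [h] at hwpos; simp at hwpos
      rcases le_or_gt 1 (‖w‖) with h | h
      · exact ⟨w, h, hwW.2.le, rfl⟩
      · refine ⟨w⁻¹, ?_, ?_, ?_⟩
        · rw [norm_inv]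
          exact one_le_inv_iff₀.mpr ⟨hwpos, h.le⟩
        · rw [norm_inv]
          rw [inv_le_comm₀ hwpos (by linarith)]
          exact hwW.1.le
        · rw [hJ]
          simp only [inv_inv]
          ring
    have hdiff : DifferentiableOn ℂ F (interior (J '' W)) := by
      rw [hF]
      apply Complex.differentiableOn_tsum_of_summable_norm
        (hsummable r (lt_trans one_pos hr1) hrρ)
        (fun n => ((P n).differentiable).differentiableOn) isOpen_interior
      intro n z hz
      obtain ⟨w, h1, h2, rfl⟩ := hVsub z hz
      simpa using hUbound r hr1.le n w h1 h2
    exact (hdiff.differentiableAt (isOpen_interior.mem_nhds hz₀V))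
  · intro x hx
    obtain ⟨hx1, hx2⟩ := hx
    set r0 : ℝ := (1 + ρ)/2 with hr0
    have hr01 : 1 < r0 := by rw [hr0]; linarith
    have hr0ρ : r0 < ρ := by rw [hr0]; linarith
    have hxU : ∃ w : ℂ, 1 ≤ ‖w‖ ∧ ‖w‖ ≤ r0 ∧ (x:ℂ) = (w + w⁻¹)/2 := by
      set w : ℂ := ⟨x, Real.sqrt (1 - x^2)⟩ with hw
      have hsq : (1 - x^2) ≥ 0 := by nlinarith
      have hnorm : Complex.normSq w = 1 := by
        rw [Complex.normSq_apply]
        simp only [hw]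
        rw [Real.mul_self_sqrt hsq]
        ring
      have habs : ‖w‖ = 1 := by
        rw [Complex.norm_def, hnorm, Real.sqrt_one]
      refine ⟨w, le_of_eq habs.symm, by rw [habs]; linarith, ?_⟩
      have hinv : w⁻¹ = (starRingEnd ℂ) w := by
        rw [Complex.inv_def, hnorm]
        simp
      rw [hinv, Complex.add_conj]
      have hwre : w.re = x := rfl
      rw [hwre]
      push_cast
      ring
    obtain ⟨w, hw1, hw2, hwx⟩ := hxU
    have hsum : Summable (fun n => (P n).eval (x:ℂ)) := by
      apply Summable.of_norm_bounded (hsummable r0 (by linarith) hr0ρ)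
      intro n
      rw [hwx]
      simpa using hUbound r0 hr01.le n w hw1 hw2
    have htend1 := hsum.hasSum.tendsto_sum_nat
    have htel : ∀ m, ∑ k ∈ Finset.range (m+1), (P k).eval (x:ℂ) = (((q m).eval x : ℝ) : ℂ) := by
      intro m
      induction m with
      | zero => simp [hPdef, hd0, hevmap]
      | succ m ih =>
        rw [Finset.sum_range_succ, ih]
        have hstep : (P (m+1)).eval (x:ℂ) = (((q (m+1) - q m).eval x : ℝ) : ℂ) := by
          rw [show P (m+1) = (q (m+1) - q m).map (algebraMap ℝ ℂ) from rfl, hevmap]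
        rw [hstep, Polynomial.eval_sub]
        push_cast
        ring
    have htend2 : Tendsto (fun m => ∑ k ∈ Finset.range (m+1), (P k).eval (x:ℂ))
        atTop (nhds (F (x:ℂ))) := htend1.comp (tendsto_add_atTop_nat 1)
    have htend3 : Tendsto (fun m => (((q m).eval x : ℝ):ℂ)) atTop (nhds ((f x : ℝ):ℂ)) := by
      have hreal : Tendsto (fun m => (q m).eval x) atTop (nhds (f x)) := by
        rw [tendsto_iff_dist_tendsto_zero]
        have hgeo : Tendsto (fun n : ℕ => C * s ^ n) atTop (nhds 0) := by
          simpa using (tendsto_pow_atTop_nhds_zero_of_lt_one hs0.le hs1).const_mul C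
        apply squeeze_zero (fun n => dist_nonneg) (fun n => ?_) hgeo
        rw [Real.dist_eq, abs_sub_comm]
        have := hqapprox n x ⟨hx1, hx2⟩
        rwa [hpow] at this
      exact (Complex.continuous_ofReal.tendsto (f x)).comp hreal
    exact tendsto_nhds_unique (htend2.congr htel) htend3
end

section
/- Let ρ > 3/2. Let F : ℂ → ℂ be complex-differentiable at every point of E_ρ, real-valued on [−1, 1], and satisfy |F(z)| ≤ 1/4 for all z ∈ E_ρ. Let f : [−1, 1] → ℝ be the restriction of F to [−1, 1]. Then for every integer n ≥ 0, sup_{x ∈ [−1,1]} |f(x) − fₙ(x)| ≤ ρ^{−n}, where fₙ is the n-th order Chebyshev projection of f. -/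
open Set MeasureTheory intervalIntegral

/-- The `k`-th Chebyshev coefficient of `f : [−1,1] → ℝ`:
`a₀ = (1/π)∫ f(x)(1−x²)^{−1/2} dx` and `a_k = (2/π)∫ f(x)T_k(x)(1−x²)^{−1/2} dx`
for `k ≥ 1`. -/
noncomputable def chebyshevCoeff (f : ℝ → ℝ) (k : ℕ) : ℝ :=
  (if k = 0 then 1 / Real.pi else 2 / Real.pi) *
    ∫ x in (-1 : ℝ)..1, f x * (Polynomial.Chebyshev.T ℝ k).eval x / Real.sqrt (1 - x ^ 2)

/-- The `n`-th order Chebyshev projection of `f : [−1,1] → ℝ`: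
`fₙ = Σ_{k=0}^{n} a_k T_k`. -/
noncomputable def chebyshevProj (f : ℝ → ℝ) (n : ℕ) (x : ℝ) : ℝ :=
  ∑ k ∈ Finset.range (n + 1), chebyshevCoeff f k * (Polynomial.Chebyshev.T ℝ k).eval x

namespace ChebAux

open Real

lemma cos_image_Ioo : Real.cos '' Ioo 0 π = Ioo (-1) 1 := by
  apply Subset.antisymm
  · rintro _ ⟨θ, hθ, rfl⟩
    constructor
    · have := Real.cos_lt_cos_of_nonneg_of_le_pi (by linarith [hθ.1] : (0:ℝ) ≤ θ) le_rfl hθ.2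
      simpa using this
    · have := Real.cos_lt_cos_of_nonneg_of_le_pi le_rfl (le_of_lt hθ.2) hθ.1
      simpa using this
  · rintro x ⟨h1, h2⟩
    refine ⟨Real.arccos x, ⟨?_, ?_⟩, Real.cos_arccos h1.le h2.le⟩
    · exact Real.arccos_pos.mpr h2
    · exact lt_of_le_of_ne (Real.arccos_le_pi x) (fun h => by
        have := Real.arccos_eq_pi.mp h; linarith)

lemma cheb_subst (g : ℝ → ℝ) :
    ∫ x in (-1:ℝ)..1, g x / Real.sqrt (1 - x ^ 2) = ∫ θ in (0:ℝ)..π, g (Real.cos θ) := by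
  have h1 : (∫ x in (-1:ℝ)..1, g x / Real.sqrt (1 - x ^ 2))
      = ∫ x in Ioo (-1:ℝ) 1, g x / Real.sqrt (1 - x ^ 2) := by
    rw [intervalIntegral.integral_of_le (by norm_num : (-1:ℝ) ≤ 1),
      MeasureTheory.integral_Ioc_eq_integral_Ioo]
  have h2 : (∫ θ in (0:ℝ)..π, g (Real.cos θ)) = ∫ θ in Ioo (0:ℝ) π, g (Real.cos θ) := by
    rw [intervalIntegral.integral_of_le Real.pi_pos.le,
      MeasureTheory.integral_Ioc_eq_integral_Ioo]
  rw [h1, h2, ← cos_image_Ioo,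
    MeasureTheory.integral_image_eq_integral_abs_deriv_smul measurableSet_Ioo
      (fun x _ => (Real.hasDerivAt_cos x).hasDerivWithinAt)
      (Real.strictAntiOn_cos.injOn.mono Ioo_subset_Icc_self)]
  refine MeasureTheory.setIntegral_congr_fun measurableSet_Ioo (fun θ hθ => ?_)
  have hs : 0 < Real.sin θ := Real.sin_pos_of_pos_of_lt_pi hθ.1 hθ.2
  have hsq : Real.sqrt (1 - Real.cos θ ^ 2) = Real.sin θ := by
    rw [← Real.sin_sq, Real.sqrt_sq hs.le]
  simp only [smul_eq_mul, abs_neg, abs_of_pos hs, hsq]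
  field_simp

lemma mem_ellipse {ρ : ℝ} (hρ : 1 < ρ) {z : ℂ} (h1 : ρ⁻¹ < ‖z‖)
    (h2 : ‖z‖ < ρ) : (z + z⁻¹) / 2 ∈ bernsteinEllipse ρ := by
  have hρ0 : 0 < ρ := by linarith
  have habs : 0 < ‖z‖ := lt_trans (by positivity) h1
  rcases le_or_gt 1 ‖z‖ with h | h
  · exact ⟨z, h, h2, rfl⟩
  · refine ⟨z⁻¹, ?_, ?_, ?_⟩
    · rw [norm_inv]; exact one_le_inv_iff₀.mpr ⟨habs, h.le⟩
    · rw [norm_inv, inv_lt_iff_one_lt_mul₀ habs]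
      have := (inv_lt_iff_one_lt_mul₀ hρ0).mp h1
      linarith [mul_comm ρ ‖z‖]
    · rw [inv_inv, add_comm]

lemma fourier_neg_coe (k : ℤ) (θ : ℝ) :
    @fourier (2*π) (-k) (θ : AddCircle (2*π)) = Complex.exp (-(k * θ) * Complex.I) := by
  rw [fourier_coe_apply]
  have hπ : (π : ℂ) ≠ 0 := Complex.ofReal_ne_zero.mpr Real.pi_ne_zero
  congr 1
  push_cast
  field_simp

lemma toCircle_coe (x : ℝ) :
    ((AddCircle.toCircle (x : AddCircle (2*π))) : ℂ) = Complex.exp (x * Complex.I) := by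
  rw [AddCircle.toCircle_apply_mk, Circle.coe_exp]
  congr 2
  rw [div_self (by positivity : (2*π : ℝ) ≠ 0), one_mul]

end ChebAux

set_option maxHeartbeats 1600000 in
/-- **Corollary.** If `F` is complex-differentiable on the Bernstein ellipse `E_ρ`
(`ρ > 3/2`), real-valued on `[−1,1]`, and bounded by `1/4` on `E_ρ`, then the
Chebyshev projections of its restriction `f` to `[−1,1]` satisfy
`‖f − fₙ‖_{L^∞[−1,1]} ≤ ρ^{−n}` for all `n ≥ 0`. -/
theorem chebyshevProj_error_le_of_analytic_bounded_quarter
    (ρ : ℝ) (hρ : 3 / 2 < ρ)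
    (F : ℂ → ℂ)
    (hdiff : ∀ z ∈ bernsteinEllipse ρ, DifferentiableAt ℂ F z)
    (hreal : ∀ x ∈ Icc (-1 : ℝ) 1, (F (x : ℂ)).im = 0)
    (hbound : ∀ z ∈ bernsteinEllipse ρ, ‖F z‖ ≤ 1 / 4)
    (f : ℝ → ℝ) (hf : ∀ x ∈ Icc (-1 : ℝ) 1, f x = (F (x : ℂ)).re) :
    ∀ n : ℕ, ∀ x ∈ Icc (-1 : ℝ) 1,
      |f x - chebyshevProj f n x| ≤ ρ ^ (-(n : ℤ)) := by
  have hρ1 : (1:ℝ) < ρ := by linarith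
  have hρ0 : (0:ℝ) < ρ := by linarith
  have hπ : (0:ℝ) < Real.pi := Real.pi_pos
  haveI : Fact (0 < 2 * Real.pi) := ⟨by positivity⟩
  set G : ℂ → ℂ := fun z => F ((z + z⁻¹) / 2) with hG
  -- G is differentiable and bounded on the annulus ρ⁻¹ < |z| < ρ
  have hGd : ∀ z : ℂ, ρ⁻¹ < ‖z‖ → ‖z‖ < ρ → DifferentiableAt ℂ G z := by
    intro z h1 h2
    have hz0 : z ≠ 0 := by
      intro hz; rw [hz] at h1; simp at h1; exact absurd (le_of_lt h1) (not_le.mpr (by positivity))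
    exact (hdiff _ (ChebAux.mem_ellipse hρ1 h1 h2)).comp z
      (((differentiableAt_id.add (differentiableAt_inv hz0)).div_const 2))
  have hGb : ∀ z : ℂ, ρ⁻¹ < ‖z‖ → ‖z‖ < ρ → ‖G z‖ ≤ 1/4 :=
    fun z h1 h2 => hbound _ (ChebAux.mem_ellipse hρ1 h1 h2)
  -- values of G on the unit circle are real values of f
  have hGcos : ∀ θ : ℝ, G (Complex.exp (θ * Complex.I)) = ((f (Real.cos θ) : ℝ) : ℂ) := by
    intro θ
    have hx : Real.cos θ ∈ Icc (-1:ℝ) 1 := ⟨Real.neg_one_le_cos θ, Real.cos_le_one θ⟩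
    have h1 : (Complex.exp (θ * Complex.I) + (Complex.exp (θ * Complex.I))⁻¹) / 2
        = ((Real.cos θ : ℝ) : ℂ) := by
      rw [← Complex.exp_neg, Complex.ofReal_cos, Complex.cos]
      ring_nf
    rw [hG]
    simp only [h1]
    have := hreal _ hx
    have hfr := hf _ hx
    rw [hfr]
    rw [Complex.ext_iff]
    constructor
    · simp
    · simpa [← Complex.ofReal_cos] using this
  -- the continuous extension to the circle
  have hcont : Continuous fun q : AddCircle (2*Real.pi) => G ((AddCircle.toCircle q : ℂ)) := by
    rw [continuous_iff_continuousAt]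
    intro q
    have habs : ‖((AddCircle.toCircle q : ℂ))‖ = 1 := Circle.norm_coe _
    have hd : DifferentiableAt ℂ G ((AddCircle.toCircle q : ℂ)) :=
      hGd _ (by rw [habs]; exact inv_lt_one_of_one_lt₀ hρ1) (by rw [habs]; exact hρ1)
    have hcc : Continuous (fun q : AddCircle (2*Real.pi) => ((AddCircle.toCircle q : ℂ))) :=
      continuous_subtype_val.comp AddCircle.continuous_toCircle
    exact ContinuousAt.comp (x := q)
      (f := fun q : AddCircle (2*Real.pi) => ((AddCircle.toCircle q : ℂ))) (g := G)
      hd.continuousAt hcc.continuousAt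
  set h : C(AddCircle (2*Real.pi), ℂ) := ⟨_, hcont⟩ with hh
  have hval : ∀ θ : ℝ, h ((θ : ℝ) : AddCircle (2*Real.pi)) = ((f (Real.cos θ) : ℝ) : ℂ) := by
    intro θ
    show G ((AddCircle.toCircle ((θ : ℝ) : AddCircle (2*Real.pi))) : ℂ) = _
    rw [ChebAux.toCircle_coe, hGcos]
  set c : ℤ → ℂ := fourierCoeff (⇑h) with hc
  set γ : ℤ → ℝ :=
    fun k => (1/Real.pi) * ∫ θ in (0:ℝ)..Real.pi, Real.cos (k * θ) * f (Real.cos θ) with hγ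
  -- the Fourier coefficients are real cosine coefficients
  have hφcont : ∀ k : ℤ, Continuous fun x : ℝ =>
      @fourier (2*Real.pi) (-k) ((x : ℝ) : AddCircle (2*Real.pi)) • h ((x : ℝ) : AddCircle (2*Real.pi)) := by
    intro k
    exact (((fourier (-k)).continuous.comp (AddCircle.continuous_mk' _)).smul
      (h.continuous.comp (AddCircle.continuous_mk' _)))
  have hcγ : ∀ k : ℤ, c k = ((γ k : ℝ) : ℂ) := by
    intro k
    rw [hc, fourierCoeff_eq_intervalIntegral (⇑h) k (-Real.pi)]
    have he : -Real.pi + 2*Real.pi = Real.pi := by ring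
    rw [he]
    set φ : ℝ → ℂ := fun x =>
      @fourier (2*Real.pi) (-k) ((x : ℝ) : AddCircle (2*Real.pi)) • h ((x : ℝ) : AddCircle (2*Real.pi)) with hφ
    have hint : ∀ a b : ℝ, IntervalIntegrable φ volume a b :=
      fun a b => (hφcont k).intervalIntegrable a b
    have hsplit : (∫ x in (-Real.pi)..Real.pi, φ x)
        = (∫ x in (-Real.pi)..(0:ℝ), φ x) + ∫ x in (0:ℝ)..Real.pi, φ x :=
      (intervalIntegral.integral_add_adjacent_intervals (hint _ _) (hint _ _)).symm
    have hneg : (∫ x in (-Real.pi)..(0:ℝ), φ x) = ∫ x in (0:ℝ)..Real.pi, φ (-x) := by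
      rw [intervalIntegral.integral_comp_neg fun x => φ x]
      norm_num
    have hφx : ∀ x : ℝ, φ x = Complex.exp (-(k * x) * Complex.I) * ((f (Real.cos x) : ℝ) : ℂ) := by
      intro x
      rw [hφ]
      simp only [smul_eq_mul]
      rw [ChebAux.fourier_neg_coe, hval]
    have hcomb : ∀ x : ℝ, φ (-x) + φ x = ((2 * (Real.cos (k * x) * f (Real.cos x)) : ℝ) : ℂ) := by
      intro x
      rw [hφx, hφx, Real.cos_neg]
      have hr : ((2 * (Real.cos (k * x) * f (Real.cos x)) : ℝ) : ℂ)
          = 2 * Complex.cos (((k : ℝ) * x : ℝ) : ℂ) * ((f (Real.cos x) : ℝ) : ℂ) := by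
        rw [Complex.ofReal_mul, Complex.ofReal_mul, Complex.ofReal_cos]
        push_cast; ring
      rw [hr, Complex.cos]
      push_cast
      ring_nf
    have hnegint : IntervalIntegrable (fun x => φ (-x)) volume 0 Real.pi :=
      ((hφcont k).comp continuous_neg).intervalIntegrable 0 Real.pi
    have hring : (∫ x in (-Real.pi)..Real.pi, φ x)
        = ∫ x in (0:ℝ)..Real.pi, (φ (-x) + φ x) := by
      rw [hsplit, hneg, ← intervalIntegral.integral_add hnegint (hint _ _)]
    rw [hring]
    have : (∫ x in (0:ℝ)..Real.pi, (φ (-x) + φ x))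
        = ((∫ x in (0:ℝ)..Real.pi, 2 * (Real.cos (k * x) * f (Real.cos x)) : ℝ) : ℂ) := by
      rw [← intervalIntegral.integral_ofReal]
      exact intervalIntegral.integral_congr (fun x _ => hcomb x)
    rw [this, intervalIntegral.integral_const_mul]
    rw [hγ]
    rw [Complex.real_smul]
    push_cast
    have hπ' : (Real.pi : ℂ) ≠ 0 := Complex.ofReal_ne_zero.mpr Real.pi_ne_zero
    field_simp
  -- contour deformation
  have hIdef : ∀ (m : ℤ) (r : ℝ), 1 ≤ r → r < ρ →
      (∮ z in C((0:ℂ), r), z ^ m * G z) = (∮ z in C((0:ℂ), 1), z ^ m * G z) := by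
    intro m r h1 h2
    have hdz : ∀ z : ℂ, 1 ≤ ‖z‖ → ‖z‖ < ρ →
        DifferentiableAt ℂ (fun z => z ^ m * G z) z := by
      intro z hz1 hz2
      have hz0 : z ≠ 0 := by
        intro hz; rw [hz] at hz1; simp at hz1; linarith
      exact ((differentiableAt_zpow.mpr (Or.inl hz0)).mul
        (hGd z (lt_of_lt_of_le (inv_lt_one_of_one_lt₀ hρ1) hz1) hz2))
    apply Complex.circleIntegral_eq_of_differentiable_on_annulus_off_countable zero_lt_one h1
      Set.countable_empty
    · intro z hz
      obtain ⟨hz1, hz2⟩ := hz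
      rw [Metric.mem_closedBall, dist_zero_right] at hz1
      rw [Metric.mem_ball, dist_zero_right] at hz2
      push_neg at hz2
      exact (hdz z (by simpa using hz2) (lt_of_le_of_lt (by simpa using hz1) h2)).continuousAt.continuousWithinAt
    · intro z hz
      obtain ⟨⟨hz1, hz2⟩, -⟩ := hz
      rw [Metric.mem_ball, dist_zero_right] at hz1
      rw [Metric.mem_closedBall, dist_zero_right] at hz2
      push_neg at hz2
      exact hdz z (by simpa using hz2.le) (lt_trans (by simpa using hz1) h2)
  -- norm bound on circles
  have hnorm : ∀ (m : ℤ) (r : ℝ), 0 < r → ρ⁻¹ < r → r < ρ →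
      ‖∮ z in C((0:ℂ), r), z ^ m * G z‖ ≤ 2 * Real.pi * r * (r ^ m * (1/4)) := by
    intro m r hr0 hrl hru
    apply circleIntegral.norm_integral_le_of_norm_le_const hr0.le
    intro z hz
    rw [mem_sphere_zero_iff_norm] at hz
    have habs : ‖z‖ = r := by simpa using hz
    rw [norm_mul, norm_zpow, habs]
    exact mul_le_mul_of_nonneg_left (hGb z (habs ▸ hrl) (habs ▸ hru))
      (zpow_nonneg hr0.le m)
  -- circle integral at radius 1 computes Fourier coefficients
  have hI1 : ∀ k : ℤ, (∮ z in C((0:ℂ), 1), z ^ (-k-1) * G z)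
      = (2*Real.pi) • (Complex.I * c k) := by
    intro k
    have hcm : ∀ θ : ℝ, circleMap 0 1 θ = Complex.exp (θ * Complex.I) := by
      intro θ; simp [circleMap]
    have hpt : ∀ θ : ℝ, deriv (circleMap 0 1) θ •
        ((circleMap 0 1 θ) ^ (-k-1) * G (circleMap 0 1 θ))
        = Complex.I * (@fourier (2*Real.pi) (-k) ((θ : ℝ) : AddCircle (2*Real.pi))
            • h ((θ : ℝ) : AddCircle (2*Real.pi))) := by
      intro θ
      have hh' : h ((θ : ℝ) : AddCircle (2*Real.pi)) = G (Complex.exp (θ * Complex.I)) := by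
        show G ((AddCircle.toCircle ((θ : ℝ) : AddCircle (2*Real.pi))) : ℂ) = _
        rw [ChebAux.toCircle_coe]
      rw [deriv_circleMap, hcm, smul_eq_mul, smul_eq_mul, ChebAux.fourier_neg_coe, hh']
      calc Complex.exp (θ * Complex.I) * Complex.I *
            (Complex.exp (θ * Complex.I) ^ (-k-1) * G (Complex.exp (θ * Complex.I)))
          = (Complex.exp (θ * Complex.I) * Complex.exp (((-k-1 : ℤ) : ℂ) * (θ * Complex.I))) *
            Complex.I * G (Complex.exp (θ * Complex.I)) := by
            rw [Complex.exp_int_mul]; ring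
        _ = Complex.exp (-(k * θ) * Complex.I) * Complex.I * G (Complex.exp (θ * Complex.I)) := by
            rw [← Complex.exp_add]; congr 1; push_cast; ring
        _ = Complex.I * (Complex.exp (-(k * θ) * Complex.I) * G (Complex.exp (θ * Complex.I))) := by
            ring
    rw [hc, fourierCoeff_eq_intervalIntegral (⇑h) k 0]
    have he : (0:ℝ) + 2*Real.pi = 2*Real.pi := by ring
    rw [he]
    show (∫ θ in (0:ℝ)..(2*Real.pi), deriv (circleMap 0 1) θ •
        ((circleMap 0 1 θ) ^ (-k-1) * G (circleMap 0 1 θ))) = _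
    rw [intervalIntegral.integral_congr (fun θ _ => hpt θ),
      intervalIntegral.integral_const_mul]
    rw [mul_smul_comm, smul_smul, mul_one_div,
      div_self (by positivity : (2*Real.pi : ℝ) ≠ 0), one_smul]
  -- coefficient bound
  have hck : ∀ j : ℕ, ‖c (j:ℤ)‖ ≤ 1/4 * (ρ ^ j)⁻¹ := by
    intro j
    have hstep : ∀ r : ℝ, 1 ≤ r → r < ρ → ‖c (j:ℤ)‖ ≤ 1/4 * (r ^ j)⁻¹ := by
      intro r h1 h2
      have hr0 : (0:ℝ) < r := by linarith
      have hb := hnorm (-(j:ℤ)-1) r hr0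
        (lt_of_lt_of_le (inv_lt_one_of_one_lt₀ hρ1) h1) h2
      rw [hIdef _ r h1 h2, hI1 j] at hb
      rw [norm_smul, Real.norm_eq_abs, abs_of_pos (by positivity : (0:ℝ) < 2*Real.pi),
        norm_mul, Complex.norm_I, one_mul] at hb
      have hz : 2 * Real.pi * r * (r ^ (-(j:ℤ)-1) * (1/4))
          = (2 * Real.pi) * (1/4 * (r ^ j)⁻¹) := by
        have : r * r ^ (-(j:ℤ)-1) = (r ^ j)⁻¹ := by
          rw [show (-(j:ℤ)-1) = -1 + (-(j:ℤ)) by ring, zpow_add₀ hr0.ne', zpow_neg, zpow_one,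
            zpow_neg, zpow_natCast]
          field_simp
        calc 2 * Real.pi * r * (r ^ (-(j:ℤ)-1) * (1/4))
            = (2 * Real.pi) * ((r * r ^ (-(j:ℤ)-1)) * (1/4)) := by ring
          _ = (2 * Real.pi) * (1/4 * (r ^ j)⁻¹) := by rw [this]; ring
      rw [hz] at hb
      have h2π : (0:ℝ) < 2 * Real.pi := by positivity
      exact le_of_mul_le_mul_left hb h2π
    have htd : Filter.Tendsto (fun r : ℝ => 1/4 * (r ^ j)⁻¹) (nhdsWithin ρ (Iio ρ))
        (nhds (1/4 * (ρ ^ j)⁻¹)) := by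
      apply Filter.Tendsto.mono_left _ nhdsWithin_le_nhds
      exact (((continuous_pow j).continuousAt).inv₀ (pow_ne_zero j hρ0.ne')).const_mul (1/4)
    refine ge_of_tendsto htd ?_
    filter_upwards [self_mem_nhdsWithin,
      (eventually_gt_nhds hρ1).filter_mono nhdsWithin_le_nhds] with r hr hr1
    exact hstep r hr1.le hr
  -- γ is even, c is "even"
  have hγeven : ∀ m : ℤ, γ (-m) = γ m := by
    intro m
    rw [hγ]
    simp only [Int.cast_neg, neg_mul, Real.cos_neg]
  -- summability
  have hgeo : Summable (fun m : ℕ => 1/4 * (ρ ^ m)⁻¹) := by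
    have : Summable (fun m : ℕ => (ρ⁻¹) ^ m) :=
      summable_geometric_of_lt_one (by positivity) (inv_lt_one_of_one_lt₀ hρ1)
    have h4 := this.mul_left (1/4)
    refine h4.congr (fun m => ?_)
    rw [inv_pow]
  have hsnat : Summable (fun m : ℕ => c (m:ℤ)) :=
    Summable.of_norm (hgeo.of_nonneg_of_le (fun m => norm_nonneg _) (fun m => hck m))
  have hsum : Summable c := by
    refine Summable.of_nat_of_neg_add_one hsnat ?_
    have he : ∀ m : ℕ, c (-((m:ℤ)+1)) = c (((m+1 : ℕ)):ℤ) := by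
      intro m
      rw [hcγ, hcγ, show -((m:ℤ)+1) = -(((m+1:ℕ)):ℤ) by push_cast; ring, hγeven]
    exact Summable.congr ((summable_nat_add_iff 1).mpr hsnat) (fun m => (he m).symm)
  -- final assembly
  intro n x hx
  set θ : ℝ := Real.arccos x with hθdef
  have hcos : Real.cos θ = x := Real.cos_arccos hx.1 hx.2
  have hS := has_pointwise_sum_fourier_series_of_summable (f := h) hsum
    ((θ : ℝ) : AddCircle (2*Real.pi))
  rw [show h ((θ : ℝ) : AddCircle (2*Real.pi)) = ((f x : ℝ) : ℂ) by rw [hval θ, hcos]] at hS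
  have hS2 := hS.nat_add_neg
  -- rewrite the terms as real cosine series
  set ta : ℕ → ℝ := fun m => γ m * (2 * Real.cos (m * θ)) with hta
  have hterm : ∀ m : ℕ, c (m:ℤ) • fourier (m:ℤ) ((θ : ℝ) : AddCircle (2*Real.pi))
      + c (-(m:ℤ)) • fourier (-(m:ℤ)) ((θ : ℝ) : AddCircle (2*Real.pi)) = ((ta m : ℝ) : ℂ) := by
    intro m
    have hfp : @fourier (2*Real.pi) (m:ℤ) ((θ : ℝ) : AddCircle (2*Real.pi))
        = Complex.exp (((m:ℝ) * θ : ℝ) * Complex.I) := by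
      rw [show ((m:ℤ)) = -(-(m:ℤ)) by ring, ChebAux.fourier_neg_coe]
      congr 1
      push_cast
      ring
    have hfm : @fourier (2*Real.pi) (-(m:ℤ)) ((θ : ℝ) : AddCircle (2*Real.pi))
        = Complex.exp (-((m:ℝ) * θ : ℝ) * Complex.I) := by
      rw [ChebAux.fourier_neg_coe]
      congr 1
      push_cast
      ring
    rw [hcγ, hcγ, hγeven, hfp, hfm, smul_eq_mul, smul_eq_mul, hta]
    have h2c : Complex.exp (((m:ℝ) * θ : ℝ) * Complex.I)
        + Complex.exp (-((m:ℝ) * θ : ℝ) * Complex.I)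
        = 2 * Complex.cos (((m:ℝ) * θ : ℝ) : ℂ) := by
      rw [Complex.cos]
      push_cast
      ring
    calc ((γ (m:ℤ) : ℝ) : ℂ) * Complex.exp (((m:ℝ) * θ : ℝ) * Complex.I)
        + ((γ (m:ℤ) : ℝ) : ℂ) * Complex.exp (-((m:ℝ) * θ : ℝ) * Complex.I)
        = ((γ (m:ℤ) : ℝ) : ℂ) * (Complex.exp (((m:ℝ) * θ : ℝ) * Complex.I)
            + Complex.exp (-((m:ℝ) * θ : ℝ) * Complex.I)) := by ring
      _ = ((γ (m:ℤ) : ℝ) : ℂ) * (2 * Complex.cos (((m:ℝ) * θ : ℝ) : ℂ)) := by rw [h2c]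
      _ = ((γ (m:ℤ) * (2 * Real.cos ((m:ℝ) * θ)) : ℝ) : ℂ) := by
          push_cast
          ring
  have hval0 : c 0 • @fourier (2*Real.pi) 0 ((θ : ℝ) : AddCircle (2*Real.pi)) = ((γ 0 : ℝ) : ℂ) := by
    rw [fourier_zero, smul_eq_mul, mul_one, hcγ]
  rw [funext hterm, hval0, show ((f x : ℝ) : ℂ) + ((γ 0 : ℝ) : ℂ) = ((f x + γ 0 : ℝ) : ℂ) by
    push_cast; ring] at hS2
  have hSr : HasSum ta (f x + γ 0) := Complex.hasSum_ofReal.mp hS2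
  -- identify partial sums with the Chebyshev projection
  have htcheb : ∀ m : ℕ, ta m
      = chebyshevCoeff f m * (Polynomial.Chebyshev.T ℝ m).eval x + (if m = 0 then γ 0 else 0) := by
    intro m
    have hT : (Polynomial.Chebyshev.T ℝ (m:ℤ)).eval x = Real.cos ((m:ℝ) * θ) := by
      rw [← hcos, Polynomial.Chebyshev.T_real_cos]
      push_cast
      ring_nf
    have hcc : chebyshevCoeff f m = (if m = 0 then 1 else 2) * γ (m:ℤ) := by
      rw [chebyshevCoeff, ChebAux.cheb_subst (fun y => f y * (Polynomial.Chebyshev.T ℝ (m:ℤ)).eval y)]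
      have : (∫ t in (0:ℝ)..Real.pi, f (Real.cos t) * (Polynomial.Chebyshev.T ℝ (m:ℤ)).eval (Real.cos t))
          = ∫ t in (0:ℝ)..Real.pi, Real.cos ((m:ℤ) * t) * f (Real.cos t) := by
        refine intervalIntegral.integral_congr (fun t _ => ?_)
        rw [Polynomial.Chebyshev.T_real_cos]
        ring
      rw [this, hγ]
      by_cases hm : m = 0 <;> simp [hm] <;> ring
    rw [hta, hcc, hT]
    by_cases hm : m = 0
    · subst hm
      simp [Real.cos_zero]
      ring
    · simp [hm]
      ring
  have hpart : (∑ m ∈ Finset.range (n+1), ta m) = γ 0 + chebyshevProj f n x := by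
    rw [chebyshevProj]
    rw [Finset.sum_congr rfl (fun m _ => htcheb m), Finset.sum_add_distrib]
    rw [Finset.sum_ite_eq' (Finset.range (n+1)) 0 (fun _ => γ 0)]
    simp [Finset.mem_range]
    ring
  have htail : HasSum (fun m : ℕ => ta (m + (n+1))) (f x - chebyshevProj f n x) := by
    have h' := ((hasSum_nat_add_iff' (f := ta) (n+1)).mpr hSr)
    rw [hpart] at h'
    convert h' using 1
    · rfl
    ring
  -- tail bound
  set b : ℕ → ℝ := fun m => ((1/2) * (ρ⁻¹)^(n+1)) * (ρ⁻¹) ^ m with hb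
  have hbound' : ∀ m : ℕ, |ta (m + (n+1))| ≤ b m := by
    intro m
    rw [hta, hb]
    have h1 : |γ ((m + (n+1) : ℕ):ℤ)| ≤ 1/4 * (ρ ^ (m + (n+1)))⁻¹ := by
      have := hck (m + (n+1))
      rwa [hcγ, Complex.norm_real, Real.norm_eq_abs] at this
    have h2 : |2 * Real.cos (((m + (n+1) : ℕ):ℝ) * θ)| ≤ 2 := by
      rw [abs_mul, abs_two]
      have := Real.abs_cos_le_one (((m + (n+1) : ℕ):ℝ) * θ)
      linarith
    calc |γ ((m + (n+1) : ℕ):ℤ) * (2 * Real.cos (((m + (n+1) : ℕ):ℝ) * θ))|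
        = |γ ((m + (n+1) : ℕ):ℤ)| * |2 * Real.cos (((m + (n+1) : ℕ):ℝ) * θ)| := abs_mul _ _
      _ ≤ (1/4 * (ρ ^ (m + (n+1)))⁻¹) * 2 := by
          apply mul_le_mul h1 h2 (abs_nonneg _)
          positivity
      _ = ((1/2) * (ρ⁻¹)^(n+1)) * (ρ⁻¹) ^ m := by
          rw [inv_pow, inv_pow, pow_add, mul_inv]
          ring
  have hbsum : HasSum b (((1/2) * (ρ⁻¹)^(n+1)) * (1 - ρ⁻¹)⁻¹) :=
    (hasSum_geometric_of_lt_one (by positivity) (inv_lt_one_of_one_lt₀ hρ1)).mul_left _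
  have habs : |f x - chebyshevProj f n x| ≤ ((1/2) * (ρ⁻¹)^(n+1)) * (1 - ρ⁻¹)⁻¹ := by
    have hsa : Summable (fun m => |ta (m + (n+1))|) :=
      hbsum.summable.of_nonneg_of_le (fun _ => abs_nonneg _) hbound'
    calc |f x - chebyshevProj f n x| = |∑' m, ta (m + (n+1))| := by rw [htail.tsum_eq]
      _ ≤ ∑' m, |ta (m + (n+1))| := by
          have hsa' : Summable fun m => ‖ta (m + (n+1))‖ := by
            simpa [Real.norm_eq_abs] using hsa
          simpa [Real.norm_eq_abs] using norm_tsum_le_tsum_norm hsa'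
      _ ≤ ∑' m, b m := Summable.tsum_le_tsum hbound' hsa hbsum.summable
      _ = ((1/2) * (ρ⁻¹)^(n+1)) * (1 - ρ⁻¹)⁻¹ := hbsum.tsum_eq
  -- arithmetic finish
  have hfin : ((1/2) * (ρ⁻¹)^(n+1)) * (1 - ρ⁻¹)⁻¹ ≤ ρ ^ (-(n:ℤ)) := by
    rw [zpow_neg, zpow_natCast]
    have hρm1 : (0:ℝ) < ρ - 1 := by linarith
    have hinv : ρ⁻¹ * (1 - ρ⁻¹)⁻¹ = (ρ - 1)⁻¹ := by
      rw [← mul_inv]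
      congr 1
      field_simp
    have hkey : (1/2) * (ρ⁻¹ * (1 - ρ⁻¹)⁻¹) ≤ 1 := by
      rw [hinv]
      rw [div_mul_eq_mul_div, mul_comm]
      rw [div_le_one (by norm_num : (0:ℝ) < 2)]
      have : (ρ - 1)⁻¹ ≤ 2 := by
        rw [inv_le_comm₀ hρm1 (by norm_num : (0:ℝ) < 2)]
        linarith
      linarith
    calc ((1/2) * (ρ⁻¹)^(n+1)) * (1 - ρ⁻¹)⁻¹
        = (ρ ^ n)⁻¹ * ((1/2) * (ρ⁻¹ * (1 - ρ⁻¹)⁻¹)) := by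
          rw [pow_succ, ← inv_pow]
          ring
      _ ≤ (ρ ^ n)⁻¹ * 1 := by
          apply mul_le_mul_of_nonneg_left hkey (by positivity)
      _ = (ρ ^ n)⁻¹ := mul_one _
  exact le_trans habs hfin
end

section
/- Let Ω ⊂ ℝ² be a bounded measurable set and let f : ℝ² → ℝ be a bounded measurable function. Define u : ℝ² → ℝ by u(x) = ∫_{Ω} log(‖x − y‖) f(y) dA_y. Then u is continuously differentiable on all of ℝ², with gradient given by differentiation under the integral sign: ∇u(x) = ∫_{Ω} (x − y)/‖x − y‖² · f(y) dA_y for every x ∈ ℝ² (in particular, the normal derivative of the potential takes equal limiting values from inside and outside of Ω at every boundary point of Ω). -/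
open MeasureTheory Set Metric Filter
open scoped ENNReal NNReal

noncomputable section LogPot

local notation "E2" => EuclideanSpace ℝ (Fin 2)

lemma LogPot.finite_lintegral_inv_norm :
    ∫⁻ y in ball (0 : E2) 1, ENNReal.ofReal ‖y‖⁻¹ ∂volume < ∞ := by
  set μ : Measure E2 := volume.restrict (ball (0 : E2) 1) with hμ
  have f_nn : 0 ≤ᵐ[μ] fun y : E2 => ‖y‖⁻¹ :=
    Filter.Eventually.of_forall fun y => by positivity
  have f_mble : AEMeasurable (fun y : E2 => ‖y‖⁻¹) μ :=
    (measurable_norm.inv).aemeasurable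
  rw [show (∫⁻ y in ball (0 : E2) 1, ENNReal.ofReal ‖y‖⁻¹ ∂volume)
      = ∫⁻ y, ENNReal.ofReal ‖y‖⁻¹ ∂μ from rfl,
    lintegral_eq_lintegral_meas_lt μ f_nn f_mble]
  set V : ℝ≥0∞ := volume (ball (0 : E2) 1) with hV
  have hVlt : V < ∞ := measure_ball_lt_top
  have hsub : ∀ t : ℝ, 0 < t → {a : E2 | t < ‖a‖⁻¹} ⊆ ball (0 : E2) t⁻¹ := by
    intro t ht a ha
    simp only [mem_setOf_eq] at ha
    have hna : 0 < ‖a‖⁻¹ := lt_trans ht ha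
    have hna' : 0 < ‖a‖ := by
      by_contra h
      have : ‖a‖ = 0 := le_antisymm (not_lt.mp h) (norm_nonneg a)
      rw [this] at hna; simp at hna
    rw [mem_ball_zero_iff]
    calc ‖a‖ = (‖a‖⁻¹)⁻¹ := by rw [inv_inv]
    _ < t⁻¹ := by exact inv_strictAnti₀ ht ha
  calc (∫⁻ t in Ioi (0:ℝ), μ {a : E2 | t < ‖a‖⁻¹})
      ≤ (∫⁻ t in Ioc (0:ℝ) 1, μ {a : E2 | t < ‖a‖⁻¹})
        + ∫⁻ t in Ioi (1:ℝ), μ {a : E2 | t < ‖a‖⁻¹} :=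
        le_trans (lintegral_mono_set Ioi_subset_Ioc_union_Ioi) (lintegral_union_le _ _ _)
    _ < ∞ := by
        apply ENNReal.add_lt_top.2
        constructor
        · calc (∫⁻ t in Ioc (0:ℝ) 1, μ {a : E2 | t < ‖a‖⁻¹})
              ≤ ∫⁻ _ in Ioc (0:ℝ) 1, V := by
                apply lintegral_mono
                intro t
                exact le_trans (measure_mono (subset_univ _)) (by
                  rw [hμ, Measure.restrict_apply_univ])
          _ = V * volume (Ioc (0:ℝ) 1) := by rw [lintegral_const, Measure.restrict_apply_univ]
          _ < ∞ := by
              apply ENNReal.mul_lt_top hVlt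
              simp [Real.volume_Ioc]
        · have hbound : ∀ t ∈ Ioi (1:ℝ), μ {a : E2 | t < ‖a‖⁻¹}
              ≤ ENNReal.ofReal (t⁻¹ ^ 2) * V := by
            intro t ht
            have ht0 : (0:ℝ) < t := lt_trans zero_lt_one ht
            calc μ {a : E2 | t < ‖a‖⁻¹} ≤ volume {a : E2 | t < ‖a‖⁻¹} :=
                  Measure.restrict_le_self _
              _ ≤ volume (ball (0 : E2) t⁻¹) := measure_mono (hsub t ht0)
              _ = ENNReal.ofReal (t⁻¹ ^ Module.finrank ℝ E2) * V := by
                  rw [Measure.addHaar_ball volume _ (by positivity : (0:ℝ) ≤ t⁻¹)]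
              _ = ENNReal.ofReal (t⁻¹ ^ 2) * V := by
                  norm_num [finrank_euclideanSpace_fin]
          calc (∫⁻ t in Ioi (1:ℝ), μ {a : E2 | t < ‖a‖⁻¹})
              ≤ ∫⁻ t in Ioi (1:ℝ), ENNReal.ofReal (t⁻¹ ^ 2) * V :=
                setLIntegral_mono' measurableSet_Ioi hbound
            _ = (∫⁻ t in Ioi (1:ℝ), ENNReal.ofReal (t⁻¹ ^ 2)) * V :=
                lintegral_mul_const' _ _ hVlt.ne
            _ < ∞ := by
                apply ENNReal.mul_lt_top _ hVlt
                have hint : IntegrableOn (fun t : ℝ => t ^ (-2 : ℝ)) (Ioi 1) volume :=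
                  integrableOn_Ioi_rpow_of_lt (by norm_num) one_pos
                have := hint.2
                rw [HasFiniteIntegral] at this
                refine lt_of_le_of_lt (lintegral_mono_ae ?_) this
                filter_upwards [ae_restrict_mem measurableSet_Ioi] with t ht
                have ht0 : (0:ℝ) < t := lt_trans zero_lt_one ht
                have : t⁻¹ ^ 2 = t ^ (-2 : ℝ) := by
                  rw [Real.rpow_neg ht0.le, show ((2:ℝ) = ((2:ℕ):ℝ)) by norm_num,
                    Real.rpow_natCast, inv_pow]
                rw [this]
                exact ENNReal.ofReal_le_ofReal_iff'.mpr (Or.inl (le_abs_self _)) |>.trans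
                  (by rw [← Real.norm_eq_abs, ofReal_norm])

lemma LogPot.integrableOn_inv_norm_ball (r : ℝ) :
    IntegrableOn (fun y : E2 => ‖y‖⁻¹) (ball 0 r) volume := by
  have hmeas : AEStronglyMeasurable (fun y : E2 => ‖y‖⁻¹) (volume.restrict (ball (0:E2) r)) :=
    (measurable_norm.inv).aestronglyMeasurable
  have h1 : IntegrableOn (fun y : E2 => ‖y‖⁻¹) (ball 0 1) volume := by
    refine ⟨(measurable_norm.inv).aestronglyMeasurable, ?_⟩
    rw [HasFiniteIntegral]
    refine lt_of_le_of_lt (le_of_eq (lintegral_congr fun y => ?_)) finite_lintegral_inv_norm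
    rw [← ofReal_norm, Real.norm_eq_abs, abs_of_nonneg (by positivity)]
  have h2 : IntegrableOn (fun y : E2 => ‖y‖⁻¹) (ball 0 r \ ball 0 1) volume := by
    apply Measure.integrableOn_of_bounded (M := 1)
    · exact ((measure_mono diff_subset).trans_lt measure_ball_lt_top).ne
    · exact (measurable_norm.inv).aestronglyMeasurable
    · filter_upwards [ae_restrict_mem ((measurableSet_ball).diff measurableSet_ball)] with y hy
      rw [Real.norm_eq_abs, abs_of_nonneg (by positivity)]
      have : (1:ℝ) ≤ ‖y‖ := by
        have := hy.2
        simpa [mem_ball_zero_iff] using this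
      exact inv_le_one_of_one_le₀ this
  have : IntegrableOn (fun y : E2 => ‖y‖⁻¹) ((ball 0 r \ ball 0 1) ∪ ball 0 1) volume :=
    h2.union h1
  exact this.mono_set (fun y hy => by
    by_cases h : y ∈ ball (0:E2) 1
    · exact Or.inr h
    · exact Or.inl ⟨hy, h⟩)


def LogPot.phi (r : ℝ) : ℝ := ∫ y in ball (0 : E2) r, ‖y‖⁻¹

lemma LogPot.phi_nonneg (r : ℝ) : 0 ≤ LogPot.phi r :=
  setIntegral_nonneg measurableSet_ball fun y _ => by positivity

lemma LogPot.indicator_comp (z : E2) (r : ℝ) (y : E2) :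
    (ball z r).indicator (fun y : E2 => ‖y - z‖⁻¹) y
      = (ball (0:E2) r).indicator (fun w : E2 => ‖w‖⁻¹) (y - z) := by
  by_cases h : y ∈ ball z r
  · rw [indicator_of_mem h, indicator_of_mem (by simpa [mem_ball_iff_norm, mem_ball_zero_iff, dist_eq_norm] using h)]
  · rw [indicator_of_notMem h, indicator_of_notMem (by
      simpa [mem_ball_iff_norm, mem_ball_zero_iff, dist_eq_norm] using h)]

lemma LogPot.integrableOn_inv_norm_sub (z : E2) (r : ℝ) :
    IntegrableOn (fun y : E2 => ‖y - z‖⁻¹) (ball z r) volume := by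
  rw [← integrable_indicator_iff measurableSet_ball]
  have h0 : Integrable ((ball (0:E2) r).indicator (fun w : E2 => ‖w‖⁻¹)) volume :=
    (integrable_indicator_iff measurableSet_ball).mpr (LogPot.integrableOn_inv_norm_ball r)
  exact (h0.comp_sub_right z).congr
    (Filter.Eventually.of_forall fun y => (LogPot.indicator_comp z r y).symm)

lemma LogPot.setIntegral_inv_norm_sub (z : E2) (r : ℝ) :
    ∫ y in ball z r, ‖y - z‖⁻¹ = LogPot.phi r := by
  rw [LogPot.phi, ← integral_indicator measurableSet_ball,
    ← integral_indicator measurableSet_ball]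
  rw [integral_congr_ae (Filter.Eventually.of_forall (LogPot.indicator_comp z r))]
  exact integral_sub_right_eq_self ((ball (0:E2) r).indicator fun w : E2 => ‖w‖⁻¹) z

lemma LogPot.integrableOn_inv_norm_sub' (z : E2) {r : ℝ} {s : Set E2} (hsub : s ⊆ ball z r) :
    IntegrableOn (fun y : E2 => ‖y - z‖⁻¹) s volume :=
  (LogPot.integrableOn_inv_norm_sub z r).mono_set hsub

lemma LogPot.key_bound (z : E2) (r : ℝ) {s : Set E2} (hsub : s ⊆ ball z r) :
    ∫ y in s, ‖y - z‖⁻¹ ≤ LogPot.phi r := by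
  rw [← LogPot.setIntegral_inv_norm_sub z r]
  exact setIntegral_mono_set (LogPot.integrableOn_inv_norm_sub z r)
    (Filter.Eventually.of_forall fun y => by positivity)
    (HasSubset.Subset.eventuallyLE hsub)

lemma LogPot.phi_small {ε : ℝ} (hε : 0 < ε) : ∃ r > 0, LogPot.phi r < ε := by
  set μ : Measure E2 := volume.restrict (ball (0 : E2) 1) with hμ
  have key : Tendsto (fun n : ℕ => LogPot.phi (1/(n+1))) atTop (nhds 0) := by
    have h := tendsto_integral_of_dominated_convergence
      (μ := μ)
      (F := fun n : ℕ => fun y : E2 => (ball (0:E2) (1/(n+1))).indicator (fun y : E2 => ‖y‖⁻¹) y)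
      (f := fun _ : E2 => (0:ℝ)) (bound := fun y : E2 => ‖y‖⁻¹)
      (fun n => ((measurable_norm.inv).indicator measurableSet_ball).aestronglyMeasurable)
      (LogPot.integrableOn_inv_norm_ball 1)
      (fun n => Filter.Eventually.of_forall fun y => by
        rw [Real.norm_eq_abs, abs_of_nonneg (indicator_nonneg (fun y _ => by positivity) y)]
        by_cases hy : y ∈ ball (0:E2) (1/((n:ℝ)+1))
        · rw [indicator_of_mem hy]
        · rw [indicator_of_notMem hy]; positivity)
      ?_
    · have hint : ∀ n : ℕ, (∫ y, (ball (0:E2) (1/(n+1))).indicator (fun y : E2 => ‖y‖⁻¹) y ∂μ)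
          = LogPot.phi (1/(n+1)) := by
        intro n
        rw [integral_indicator measurableSet_ball, hμ, Measure.restrict_restrict measurableSet_ball,
          inter_eq_self_of_subset_left (ball_subset_ball (by
            rw [div_le_one (by positivity)]; simp [le_add_of_nonneg_left]))]
        rfl
      simpa only [integral_zero, hint] using h
    · have h0 : ∀ᵐ y ∂μ, y ≠ (0:E2) := by
        refine ae_restrict_of_ae ?_
        have h1 : volume ({(0:E2)} : Set E2) = 0 := measure_singleton _
        rw [ae_iff]
        simpa using h1
      filter_upwards [h0] with y hy
      obtain ⟨N, hN⟩ := exists_nat_one_div_lt (norm_pos_iff.mpr hy)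
      refine Filter.Tendsto.congr' ?_ tendsto_const_nhds
      filter_upwards [Filter.eventually_ge_atTop N] with n hn
      refine (indicator_of_notMem ?_ _).symm
      rw [mem_ball_zero_iff]
      push_neg
      calc (1:ℝ)/(n+1) ≤ 1/(N+1) := by
            have h1 : ((N:ℝ)+1) ≤ (n:ℝ)+1 := by
              have : (N:ℝ) ≤ (n:ℝ) := Nat.cast_le.mpr hn
              linarith
            exact one_div_le_one_div_of_le (by positivity) h1
        _ ≤ ‖y‖ := hN.le
  obtain ⟨n, hn⟩ := (key.eventually_lt_const hε).exists
  exact ⟨1/(n+1), by positivity, hn⟩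


namespace LogPot

open scoped RealInnerProductSpace

/-- The gradient kernel. -/
def k (f : E2 → ℝ) (x y : E2) : E2 := (f y / ‖x - y‖ ^ 2) • (x - y)

lemma norm_k_le {f : E2 → ℝ} {C : ℝ} (hC : ∀ y, |f y| ≤ C) (x y : E2) :
    ‖k f x y‖ ≤ C * ‖y - x‖⁻¹ := by
  have hC0 : 0 ≤ C := le_trans (abs_nonneg _) (hC x)
  by_cases h : x = y
  · simp [k, h]
  · have hpos : 0 < ‖x - y‖ := by rwa [norm_pos_iff, sub_ne_zero]
    rw [k, norm_smul, Real.norm_eq_abs, abs_div,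
      abs_of_nonneg (by positivity : (0:ℝ) ≤ ‖x - y‖ ^ 2), norm_sub_rev y x]
    have heq : |f y| / ‖x - y‖ ^ 2 * ‖x - y‖ = |f y| * ‖x - y‖⁻¹ := by
      field_simp
    rw [heq]
    exact mul_le_mul_of_nonneg_right (hC y) (by positivity)

lemma measurable_k {f : E2 → ℝ} (hf : Measurable f) (x : E2) : Measurable (k f x) :=
  (hf.div (((measurable_const.sub measurable_id).norm).pow_const 2)).smul
    (measurable_const.sub measurable_id)

lemma integrableOn_k {f : E2 → ℝ} {C : ℝ} (hf : Measurable f) (hC : ∀ y, |f y| ≤ C)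
    {s : Set E2} (hs : Bornology.IsBounded s) (x : E2) :
    IntegrableOn (k f x) s volume := by
  obtain ⟨r, hr⟩ := hs.subset_ball x
  have h1 : IntegrableOn (fun y : E2 => C * ‖y - x‖⁻¹) (ball x r) volume :=
    (integrableOn_inv_norm_sub x r).const_mul C
  have h2 : IntegrableOn (fun y : E2 => C * ‖y - x‖⁻¹) s volume := h1.mono_set hr
  exact Integrable.mono' h2 (measurable_k hf x).aestronglyMeasurable
    (Filter.Eventually.of_forall fun y => norm_k_le hC x y)

lemma measurable_l {f : E2 → ℝ} (hf : Measurable f) (x : E2) :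
    Measurable (fun y : E2 => Real.log ‖x - y‖ * f y) :=
  ((measurable_const.sub measurable_id).norm.log).mul hf

lemma abs_log_le {R a : ℝ} (hR : 1 ≤ R) (ha : 0 ≤ a) (haR : a < R) :
    |Real.log a| ≤ a⁻¹ + Real.log R := by
  have hlogR : 0 ≤ Real.log R := Real.log_nonneg hR
  rcases eq_or_lt_of_le ha with h0 | h0
  · simp [← h0, Real.log_zero]
    positivity
  rcases le_or_gt a 1 with h1 | h1
  · rw [abs_of_nonpos (Real.log_nonpos ha h1), ← Real.log_inv]
    have := Real.log_le_sub_one_of_pos (show (0:ℝ) < a⁻¹ by positivity)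
    linarith
  · rw [abs_of_nonneg (Real.log_nonneg h1.le)]
    have := Real.log_le_log (by linarith) haR.le
    have ha' : 0 ≤ a⁻¹ := by positivity
    linarith

lemma integrableOn_l {f : E2 → ℝ} {C : ℝ} (hf : Measurable f) (hC : ∀ y, |f y| ≤ C)
    {s : Set E2} (hsm : MeasurableSet s) (hs : Bornology.IsBounded s) (x : E2) :
    IntegrableOn (fun y : E2 => Real.log ‖x - y‖ * f y) s volume := by
  have hC0 : 0 ≤ C := le_trans (abs_nonneg _) (hC x)
  obtain ⟨r, hr⟩ := hs.subset_ball x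
  set R := max r 1 with hR
  have hR1 : 1 ≤ R := le_max_right _ _
  have hrR : s ⊆ ball x R := hr.trans (ball_subset_ball (le_max_left _ _))
  have hfin : volume s < ∞ := lt_of_le_of_lt (measure_mono hrR) measure_ball_lt_top
  have hmaj : IntegrableOn (fun y : E2 => C * (‖y - x‖⁻¹ + Real.log R)) s volume := by
    apply Integrable.const_mul
    exact ((integrableOn_inv_norm_sub' x hrR).add (integrableOn_const hfin.ne))
  refine Integrable.mono' hmaj (measurable_l hf x).aestronglyMeasurable ?_
  filter_upwards [ae_restrict_mem hsm] with y hy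
  have hmem : ‖x - y‖ < R := by
    have := hrR hy
    rw [mem_ball_iff_norm] at this
    rwa [norm_sub_rev]
  have hlogR : 0 ≤ Real.log R := Real.log_nonneg hR1
  rw [Real.norm_eq_abs, abs_mul]
  calc |Real.log ‖x - y‖| * |f y| ≤ (‖x - y‖⁻¹ + Real.log R) * C :=
        mul_le_mul (abs_log_le hR1 (norm_nonneg _) hmem) (hC y) (abs_nonneg _)
          (add_nonneg (by positivity) hlogR)
    _ = C * (‖y - x‖⁻¹ + Real.log R) := by rw [norm_sub_rev]; ring

lemma hasFDerivAt_log_norm (y : E2) {x : E2} (h : x ≠ y) :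
    HasFDerivAt (fun x : E2 => Real.log ‖x - y‖)
      (innerSL ℝ ((‖x - y‖ ^ 2)⁻¹ • (x - y))) x := by
  have hxy : x - y ≠ 0 := sub_ne_zero.mpr h
  have hpos : (0:ℝ) < ‖x - y‖ := norm_pos_iff.mpr hxy
  have hsub : HasFDerivAt (fun z : E2 => z - y) (ContinuousLinearMap.id ℝ E2) x :=
    (hasFDerivAt_id x).sub_const y
  have hq : HasFDerivAt (fun z : E2 => ⟪z - y, z - y⟫)
      ((fderivInnerCLM ℝ (x - y, x - y)).comp
        ((ContinuousLinearMap.id ℝ E2).prod (ContinuousLinearMap.id ℝ E2))) x :=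
    hsub.inner ℝ hsub
  have hne : ⟪x - y, x - y⟫ ≠ 0 := by
    rw [real_inner_self_eq_norm_sq]
    exact pow_ne_zero 2 hpos.ne'
  have hlog := hq.log hne
  have hhalf := hlog.const_mul (2⁻¹ : ℝ)
  have hfun : (fun z : E2 => (2⁻¹ : ℝ) * Real.log ⟪z - y, z - y⟫)
      = fun z : E2 => Real.log ‖z - y‖ := by
    funext z
    rw [real_inner_self_eq_norm_sq, Real.log_pow]
    push_cast
    ring
  rw [hfun] at hhalf
  refine HasFDerivAt.congr_fderiv hhalf ?_
  apply ContinuousLinearMap.ext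
  intro w
  simp only [ContinuousLinearMap.smul_apply, ContinuousLinearMap.comp_apply,
    ContinuousLinearMap.prod_apply, ContinuousLinearMap.id_apply,
    fderivInnerCLM_apply, innerSL_apply_apply]
  rw [real_inner_smul_left, real_inner_self_eq_norm_sq, real_inner_comm w (x - y)]
  have : ‖x - y‖ ^ 2 ≠ 0 := by positivity
  simp only [smul_eq_mul]
  field_simp
  ring

lemma hasFDerivAt_l {f : E2 → ℝ} (y : E2) {x : E2} (h : x ≠ y) :
    HasFDerivAt (fun x : E2 => Real.log ‖x - y‖ * f y) (innerSL ℝ (k f x y)) x := by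
  have := (hasFDerivAt_log_norm y h).mul_const (f y)
  refine HasFDerivAt.congr_fderiv this ?_
  apply ContinuousLinearMap.ext
  intro w
  simp only [ContinuousLinearMap.smul_apply, innerSL_apply_apply, smul_eq_mul, k]
  rw [real_inner_smul_left, real_inner_smul_left]
  field_simp


lemma measure_lt_top_of_bounded {s : Set E2} (hs : Bornology.IsBounded s) :
    volume s < ∞ := by
  obtain ⟨r, hr⟩ := hs.subset_ball 0
  exact (measure_mono hr).trans_lt measure_ball_lt_top

lemma abs_log_sub_log_le {a b : ℝ} (ha : 0 < a) (hb : 0 < b) :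
    |Real.log a - Real.log b| ≤ |a - b| * (a⁻¹ + b⁻¹) := by
  have core : ∀ a b : ℝ, 0 < a → 0 < b → b ≤ a →
      |Real.log a - Real.log b| ≤ |a - b| * (a⁻¹ + b⁻¹) := by
    intro a b ha hb h
    have habs : |a - b| = a - b := abs_of_nonneg (sub_nonneg.mpr h)
    have hlog : Real.log b ≤ Real.log a := Real.log_le_log hb h
    rw [abs_of_nonneg (sub_nonneg.mpr hlog), habs]
    have h1 : Real.log a - Real.log b ≤ a / b - 1 := by
      rw [← Real.log_div ha.ne' hb.ne']
      exact Real.log_le_sub_one_of_pos (div_pos ha hb)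
    have h3 : a / b - 1 = (a - b) * b⁻¹ := by field_simp
    have h4 : (a - b) * b⁻¹ ≤ (a - b) * (a⁻¹ + b⁻¹) := by
      apply mul_le_mul_of_nonneg_left _ (sub_nonneg.mpr h)
      have : 0 ≤ a⁻¹ := by positivity
      linarith
    linarith
  rcases le_total b a with h | h
  · exact core a b ha hb h
  · rw [abs_sub_comm, abs_sub_comm a b, add_comm]
    exact core b a hb ha h

lemma l_diff_bound {f : E2 → ℝ} {C : ℝ} (hC : ∀ y, |f y| ≤ C) {x x' y : E2}
    (hx : y ≠ x) (hx' : y ≠ x') :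
    |Real.log ‖x - y‖ * f y - Real.log ‖x' - y‖ * f y|
      ≤ C * ‖x - x'‖ * (‖y - x‖⁻¹ + ‖y - x'‖⁻¹) := by
  have hC0 : 0 ≤ C := (abs_nonneg _).trans (hC x)
  have ha : 0 < ‖x - y‖ := norm_pos_iff.mpr (sub_ne_zero.mpr hx.symm)
  have hb : 0 < ‖x' - y‖ := norm_pos_iff.mpr (sub_ne_zero.mpr hx'.symm)
  have htri : |‖x - y‖ - ‖x' - y‖| ≤ ‖x - x'‖ := by
    have := abs_norm_sub_norm_le (x - y) (x' - y)
    rwa [sub_sub_sub_cancel_right] at this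
  calc |Real.log ‖x - y‖ * f y - Real.log ‖x' - y‖ * f y|
      = |Real.log ‖x - y‖ - Real.log ‖x' - y‖| * |f y| := by rw [← sub_mul, abs_mul]
    _ ≤ (|‖x - y‖ - ‖x' - y‖| * (‖x - y‖⁻¹ + ‖x' - y‖⁻¹)) * C :=
        mul_le_mul (abs_log_sub_log_le ha hb) (hC y) (abs_nonneg _)
          (mul_nonneg (abs_nonneg _) (by positivity))
    _ ≤ (‖x - x'‖ * (‖x - y‖⁻¹ + ‖x' - y‖⁻¹)) * C := by
        apply mul_le_mul_of_nonneg_right _ hC0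
        exact mul_le_mul_of_nonneg_right htri (by positivity)
    _ = C * ‖x - x'‖ * (‖y - x‖⁻¹ + ‖y - x'‖⁻¹) := by
        rw [norm_sub_rev x y, norm_sub_rev x' y]
        ring

lemma norm_setIntegral_k_le {f : E2 → ℝ} {C : ℝ} (hf : Measurable f) (hC : ∀ y, |f y| ≤ C)
    {s : Set E2} {x : E2} {r : ℝ} (hsub : s ⊆ ball x r) :
    ‖∫ y in s, k f x y‖ ≤ C * phi r := by
  have hC0 : 0 ≤ C := (abs_nonneg _).trans (hC x)
  have hsb : Bornology.IsBounded s := (Metric.isBounded_ball).subset hsub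
  calc ‖∫ y in s, k f x y‖ ≤ ∫ y in s, ‖k f x y‖ := norm_integral_le_integral_norm _
    _ ≤ ∫ y in s, C * ‖y - x‖⁻¹ :=
        integral_mono ((integrableOn_k hf hC hsb x).norm)
          ((integrableOn_inv_norm_sub' x hsub).const_mul C)
          (fun y => norm_k_le hC x y)
    _ = C * ∫ y in s, ‖y - x‖⁻¹ := integral_const_mul C _
    _ ≤ C * phi r := mul_le_mul_of_nonneg_left (key_bound x r hsub) hC0


lemma hasFDerivAt_potential {Ω : Set E2} (hΩm : MeasurableSet Ω) (hΩb : Bornology.IsBounded Ω)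
    {f : E2 → ℝ} {C : ℝ} (hf : Measurable f) (hC : ∀ y, |f y| ≤ C) (x₀ : E2) :
    HasFDerivAt (fun x : E2 => ∫ y in Ω, Real.log ‖x - y‖ * f y)
      (innerSL ℝ (∫ y in Ω, k f x₀ y)) x₀ := by
  have hC0 : 0 ≤ C := (abs_nonneg _).trans (hC x₀)
  refine HasFDerivAt.of_isLittleO (Asymptotics.isLittleO_iff.mpr ?_)
  intro c hc
  obtain ⟨ε₁, hε₁pos, hεsmall⟩ := phi_small (show (0:ℝ) < c/(6*(C+1)) by positivity)
  have hCphi : C * phi ε₁ < c/6 := by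
    have h1 : C * phi ε₁ ≤ (C+1) * phi ε₁ :=
      mul_le_mul_of_nonneg_right (by linarith) (phi_nonneg _)
    have h2 : (C+1) * phi ε₁ < (C+1) * (c/(6*(C+1))) :=
      mul_lt_mul_of_pos_left hεsmall (by linarith)
    have h3 : (C+1) * (c/(6*(C+1))) = c/6 := by field_simp
    linarith
  set δ : ℝ := ε₁/3 with hδdef
  have hδpos : 0 < δ := by positivity
  set S : Set E2 := Ω ∩ ball x₀ (2*δ) with hSdef
  set T : Set E2 := Ω \ ball x₀ (2*δ) with hTdef
  have hSm : MeasurableSet S := hΩm.inter measurableSet_ball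
  have hTm : MeasurableSet T := hΩm.diff measurableSet_ball
  have hSb : Bornology.IsBounded S := hΩb.subset inter_subset_left
  have hTb : Bornology.IsBounded T := hΩb.subset diff_subset
  have hdisj : Disjoint S T := Set.disjoint_left.mpr fun y hyS hyT => hyT.2 hyS.2
  have hunion : S ∪ T = Ω := inter_union_diff Ω (ball x₀ (2*δ))
  have hT_far : ∀ y ∈ T, 2*δ ≤ ‖y - x₀‖ := by
    intro y hy
    have := hy.2
    rw [mem_ball_iff_norm] at this
    push_neg at this
    exact this
  -- splitting of the integrals
  have hsplit_l : ∀ x : E2, (∫ y in Ω, Real.log ‖x - y‖ * f y)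
      = (∫ y in S, Real.log ‖x - y‖ * f y) + ∫ y in T, Real.log ‖x - y‖ * f y := by
    intro x
    rw [← hunion]
    exact setIntegral_union hdisj hTm
      (integrableOn_l hf hC hSm hSb x) (integrableOn_l hf hC hTm hTb x)
  have hsplit_k : (∫ y in Ω, k f x₀ y) = (∫ y in S, k f x₀ y) + ∫ y in T, k f x₀ y := by
    rw [← hunion]
    exact setIntegral_union hdisj hTm
      ((integrableOn_k hf hC hSb x₀)) ((integrableOn_k hf hC hTb x₀))
  -- derivative of the far part
  have hfar : HasFDerivAt (fun x : E2 => ∫ y in T, Real.log ‖x - y‖ * f y)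
      (innerSL ℝ (∫ y in T, k f x₀ y)) x₀ := by
    have key := hasFDerivAt_integral_of_dominated_loc_of_lip
      (μ := volume.restrict T) (x₀ := x₀)
      (F := fun (x : E2) (y : E2) => Real.log ‖x - y‖ * f y)
      (F' := fun y : E2 => innerSL ℝ (k f x₀ y))
      (bound := fun _ : E2 => 2*C/δ) (ball_mem_nhds x₀ hδpos)
      (Filter.Eventually.of_forall fun x => (measurable_l hf x).aestronglyMeasurable)
      (integrableOn_l hf hC hTm hTb x₀)
      ((innerSL ℝ).continuous.comp_aestronglyMeasurable
        (measurable_k hf x₀).aestronglyMeasurable)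
      ?_ ?_ ?_
    · have hcomm : (∫ y in T, innerSL ℝ (k f x₀ y)) = innerSL ℝ (∫ y in T, k f x₀ y) :=
        ContinuousLinearMap.integral_comp_comm (innerSL ℝ) (integrableOn_k hf hC hTb x₀)
      rw [hcomm] at key
      exact key.2
    · -- Lipschitz bound
      filter_upwards [ae_restrict_mem hTm] with y hy
      apply LipschitzOnWith.of_dist_le_mul
      intro x hx x' hx'
      rw [mem_ball, dist_eq_norm] at hx hx'
      have hdist : ∀ z : E2, ‖z - x₀‖ < δ → δ ≤ ‖y - z‖ := by
        intro z hz
        have htri : ‖y - x₀‖ ≤ ‖y - z‖ + ‖z - x₀‖ := by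
          simpa [dist_eq_norm] using dist_triangle y z x₀
        have := hT_far y hy
        linarith
      have h1 : δ ≤ ‖y - x‖ := hdist x hx
      have h2 : δ ≤ ‖y - x'‖ := hdist x' hx'
      have hyx : y ≠ x := by
        intro h; rw [h] at h1; simp at h1; linarith
      have hyx' : y ≠ x' := by
        intro h; rw [h] at h2; simp at h2; linarith
      rw [Real.dist_eq, dist_eq_norm]
      calc |Real.log ‖x - y‖ * f y - Real.log ‖x' - y‖ * f y|
          ≤ C * ‖x - x'‖ * (‖y - x‖⁻¹ + ‖y - x'‖⁻¹) := l_diff_bound hC hyx hyx'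
        _ ≤ C * ‖x - x'‖ * (δ⁻¹ + δ⁻¹) := by
            apply mul_le_mul_of_nonneg_left _ (by positivity)
            exact add_le_add (inv_anti₀ hδpos h1) (inv_anti₀ hδpos h2)
        _ = (2*C/δ) * ‖x - x'‖ := by field_simp; ring
        _ = ↑(Real.nnabs (2*C/δ)) * ‖x - x'‖ := by
            rw [Real.coe_nnabs, abs_of_nonneg (by positivity)]
    · exact integrableOn_const (measure_lt_top_of_bounded hTb).ne
    · -- differentiability at x₀ for a.e. y in T
      filter_upwards [ae_restrict_mem hTm] with y hy
      have hne : x₀ ≠ y := by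
        intro h
        have := hT_far y hy
        rw [← h] at this
        simp at this
        linarith
      exact hasFDerivAt_l y hne
  -- little-o of the far part
  have hfaro := (Asymptotics.isLittleO_iff.mp hfar.isLittleO)
    (show (0:ℝ) < c/3 by positivity)
  filter_upwards [hfaro, ball_mem_nhds x₀ hδpos] with x hBx hxball
  rw [mem_ball, dist_eq_norm] at hxball
  -- the near sets are contained in small balls
  have hS_sub1 : S ⊆ ball x₀ ε₁ := fun y hy => by
    have := hy.2
    rw [mem_ball_iff_norm] at this ⊢
    rw [hδdef] at this
    linarith
  have hS_sub2 : S ⊆ ball x ε₁ := fun y hy => by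
    have h1 := hy.2
    rw [mem_ball_iff_norm] at h1 ⊢
    have htri : ‖y - x‖ ≤ ‖y - x₀‖ + ‖x - x₀‖ := by
      have := dist_triangle y x₀ x
      simp only [dist_eq_norm] at this
      calc ‖y - x‖ ≤ ‖y - x₀‖ + ‖x₀ - x‖ := this
        _ = ‖y - x₀‖ + ‖x - x₀‖ := by rw [norm_sub_rev x₀ x]
    rw [hδdef] at h1 hxball
    linarith
  -- estimate for the near part of the potential difference
  have hAint : ∀ z : E2, IntegrableOn (fun y => Real.log ‖z - y‖ * f y) S volume :=
    fun z => integrableOn_l hf hC hSm hSb z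
  have hApair : ∀ᵐ y ∂(volume.restrict S), y ≠ x ∧ y ≠ x₀ := by
    refine ae_restrict_of_ae ?_
    have h1 : ∀ᵐ y : E2 ∂volume, y ≠ x := by
      rw [ae_iff]
      have : {y : E2 | ¬ y ≠ x} = {x} := by ext y; simp
      rw [this]
      exact measure_singleton x
    have h2 : ∀ᵐ y : E2 ∂volume, y ≠ x₀ := by
      rw [ae_iff]
      have : {y : E2 | ¬ y ≠ x₀} = {x₀} := by ext y; simp
      rw [this]
      exact measure_singleton x₀
    exact h1.and h2
  have hmaj_int : IntegrableOn
      (fun y => C * ‖x - x₀‖ * (‖y - x‖⁻¹ + ‖y - x₀‖⁻¹)) S volume :=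
    ((integrableOn_inv_norm_sub' x hS_sub2).add
      (integrableOn_inv_norm_sub' x₀ hS_sub1)).const_mul _
  have hAdiff : ‖(∫ y in S, Real.log ‖x - y‖ * f y) - ∫ y in S, Real.log ‖x₀ - y‖ * f y‖
      ≤ c/3 * ‖x - x₀‖ := by
    rw [← integral_sub (hAint x) (hAint x₀)]
    calc ‖∫ y in S, (Real.log ‖x - y‖ * f y - Real.log ‖x₀ - y‖ * f y)‖
        ≤ ∫ y in S, ‖Real.log ‖x - y‖ * f y - Real.log ‖x₀ - y‖ * f y‖ :=
          norm_integral_le_integral_norm _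
      _ ≤ ∫ y in S, C * ‖x - x₀‖ * (‖y - x‖⁻¹ + ‖y - x₀‖⁻¹) := by
          refine integral_mono_ae (((hAint x).sub (hAint x₀)).norm) hmaj_int ?_
          filter_upwards [hApair] with y hy
          rw [Real.norm_eq_abs]
          exact l_diff_bound hC hy.1 hy.2
      _ = C * ‖x - x₀‖ * ((∫ y in S, ‖y - x‖⁻¹) + ∫ y in S, ‖y - x₀‖⁻¹) := by
          rw [integral_const_mul, integral_add (integrableOn_inv_norm_sub' x hS_sub2)
            (integrableOn_inv_norm_sub' x₀ hS_sub1)]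
      _ ≤ C * ‖x - x₀‖ * (phi ε₁ + phi ε₁) := by
          apply mul_le_mul_of_nonneg_left _ (by positivity)
          exact add_le_add (key_bound x ε₁ hS_sub2) (key_bound x₀ ε₁ hS_sub1)
      _ ≤ c/3 * ‖x - x₀‖ := by nlinarith [norm_nonneg (x - x₀), phi_nonneg ε₁]
  -- estimate for the near part of the gradient
  have hvS : ‖∫ y in S, k f x₀ y‖ ≤ C * phi ε₁ := norm_setIntegral_k_le hf hC hS_sub1
  have hvSterm : ‖(innerSL ℝ) (∫ y in S, k f x₀ y) (x - x₀)‖ ≤ c/6 * ‖x - x₀‖ := by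
    rw [innerSL_apply_apply, Real.norm_eq_abs]
    calc |⟪∫ y in S, k f x₀ y, x - x₀⟫| ≤ ‖∫ y in S, k f x₀ y‖ * ‖x - x₀‖ :=
          abs_real_inner_le_norm _ _
      _ ≤ (C * phi ε₁) * ‖x - x₀‖ := mul_le_mul_of_nonneg_right hvS (norm_nonneg _)
      _ ≤ c/6 * ‖x - x₀‖ := mul_le_mul_of_nonneg_right hCphi.le (norm_nonneg _)
  -- put everything together
  rw [hsplit_l x, hsplit_l x₀, hsplit_k]
  rw [show (innerSL ℝ) ((∫ y in S, k f x₀ y) + ∫ y in T, k f x₀ y)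
      = (innerSL ℝ) (∫ y in S, k f x₀ y) + (innerSL ℝ) (∫ y in T, k f x₀ y) from
    map_add _ _ _]
  have hexp : ((∫ y in S, Real.log ‖x - y‖ * f y) + ∫ y in T, Real.log ‖x - y‖ * f y)
      - ((∫ y in S, Real.log ‖x₀ - y‖ * f y) + ∫ y in T, Real.log ‖x₀ - y‖ * f y)
      - ((innerSL ℝ) (∫ y in S, k f x₀ y) + (innerSL ℝ) (∫ y in T, k f x₀ y)) (x - x₀)
      = ((∫ y in T, Real.log ‖x - y‖ * f y) - (∫ y in T, Real.log ‖x₀ - y‖ * f y)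
          - (innerSL ℝ) (∫ y in T, k f x₀ y) (x - x₀))
        + (((∫ y in S, Real.log ‖x - y‖ * f y) - ∫ y in S, Real.log ‖x₀ - y‖ * f y)
          - (innerSL ℝ) (∫ y in S, k f x₀ y) (x - x₀)) := by
    simp only [ContinuousLinearMap.add_apply]
    ring
  rw [hexp]
  refine (norm_add_le _ _).trans ?_
  refine le_trans (add_le_add hBx ((norm_sub_le _ _).trans (add_le_add hAdiff hvSterm))) ?_
  nlinarith [norm_nonneg (x - x₀)]


lemma continuous_v {Ω : Set E2} (hΩm : MeasurableSet Ω) (hΩb : Bornology.IsBounded Ω)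
    {f : E2 → ℝ} {C : ℝ} (hf : Measurable f) (hC : ∀ y, |f y| ≤ C) :
    Continuous (fun x : E2 => ∫ y in Ω, k f x y) := by
  have hC0 : 0 ≤ C := (abs_nonneg _).trans (hC 0)
  rw [continuous_iff_continuousAt]
  intro x₀
  rw [ContinuousAt, Metric.tendsto_nhds]
  intro ε hε
  obtain ⟨ε₁, hε₁pos, hεsmall⟩ := phi_small (show (0:ℝ) < ε/(5*(C+1)) by positivity)
  have hCphi : C * phi ε₁ < ε/5 := by
    have h1 : C * phi ε₁ ≤ (C+1) * phi ε₁ :=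
      mul_le_mul_of_nonneg_right (by linarith) (phi_nonneg _)
    have h2 : (C+1) * phi ε₁ < (C+1) * (ε/(5*(C+1))) :=
      mul_lt_mul_of_pos_left hεsmall (by linarith)
    have h3 : (C+1) * (ε/(5*(C+1))) = ε/5 := by field_simp
    linarith
  set δ : ℝ := ε₁/3 with hδdef
  have hδpos : 0 < δ := by positivity
  set S : Set E2 := Ω ∩ ball x₀ (2*δ) with hSdef
  set T : Set E2 := Ω \ ball x₀ (2*δ) with hTdef
  have hSm : MeasurableSet S := hΩm.inter measurableSet_ball
  have hTm : MeasurableSet T := hΩm.diff measurableSet_ball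
  have hSb : Bornology.IsBounded S := hΩb.subset inter_subset_left
  have hTb : Bornology.IsBounded T := hΩb.subset diff_subset
  have hdisj : Disjoint S T := Set.disjoint_left.mpr fun y hyS hyT => hyT.2 hyS.2
  have hunion : S ∪ T = Ω := inter_union_diff Ω (ball x₀ (2*δ))
  have hT_far : ∀ y ∈ T, 2*δ ≤ ‖y - x₀‖ := by
    intro y hy
    have := hy.2
    rw [mem_ball_iff_norm] at this
    push_neg at this
    exact this
  have hsplit_k : ∀ x : E2, (∫ y in Ω, k f x y) = (∫ y in S, k f x y) + ∫ y in T, k f x y := by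
    intro x
    rw [← hunion]
    exact setIntegral_union hdisj hTm
      (integrableOn_k hf hC hSb x) (integrableOn_k hf hC hTb x)
  -- far part is continuous at x₀
  have hfarcont : ContinuousAt (fun x : E2 => ∫ y in T, k f x y) x₀ := by
    apply continuousAt_of_dominated (bound := fun _ : E2 => C * δ⁻¹)
    · exact Filter.Eventually.of_forall fun x => (measurable_k hf x).aestronglyMeasurable
    · filter_upwards [ball_mem_nhds x₀ hδpos] with x hx
      filter_upwards [ae_restrict_mem hTm] with y hy
      rw [mem_ball, dist_eq_norm] at hx
      have h1 : δ ≤ ‖y - x‖ := by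
        have htri : ‖y - x₀‖ ≤ ‖y - x‖ + ‖x - x₀‖ := by
          simpa [dist_eq_norm] using dist_triangle y x x₀
        have := hT_far y hy
        linarith
      calc ‖k f x y‖ ≤ C * ‖y - x‖⁻¹ := norm_k_le hC x y
        _ ≤ C * δ⁻¹ := mul_le_mul_of_nonneg_left (inv_anti₀ hδpos h1) hC0
    · exact integrableOn_const (measure_lt_top_of_bounded hTb).ne
    · filter_upwards [ae_restrict_mem hTm] with y hy
      have hne : ‖x₀ - y‖ ^ 2 ≠ 0 := by
        have h2δ := hT_far y hy
        have : (0:ℝ) < ‖x₀ - y‖ := by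
          rw [norm_sub_rev]
          linarith
        positivity
      have h1 : ContinuousAt (fun x : E2 => f y / ‖x - y‖ ^ 2) x₀ :=
        continuousAt_const.div
          ((((continuous_id.sub continuous_const).norm).pow 2).continuousAt) hne
      exact h1.smul ((continuous_id.sub continuous_const)).continuousAt
  have hfareps := Metric.tendsto_nhds.mp hfarcont (ε/5) (by positivity)
  filter_upwards [hfareps, ball_mem_nhds x₀ hδpos] with x hfx hxball
  rw [mem_ball, dist_eq_norm] at hxball
  have hS_sub1 : S ⊆ ball x₀ ε₁ := fun y hy => by
    have := hy.2
    rw [mem_ball_iff_norm] at this ⊢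
    rw [hδdef] at this
    linarith
  have hS_sub2 : S ⊆ ball x ε₁ := fun y hy => by
    have h1 := hy.2
    rw [mem_ball_iff_norm] at h1 ⊢
    have htri : ‖y - x‖ ≤ ‖y - x₀‖ + ‖x - x₀‖ := by
      calc ‖y - x‖ ≤ ‖y - x₀‖ + ‖x₀ - x‖ := by
            simpa [dist_eq_norm] using dist_triangle y x₀ x
        _ = ‖y - x₀‖ + ‖x - x₀‖ := by rw [norm_sub_rev x₀ x]
    rw [hδdef] at h1 hxball
    linarith
  have hvS1 : ‖∫ y in S, k f x y‖ ≤ C * phi ε₁ := norm_setIntegral_k_le hf hC hS_sub2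
  have hvS2 : ‖∫ y in S, k f x₀ y‖ ≤ C * phi ε₁ := norm_setIntegral_k_le hf hC hS_sub1
  rw [dist_eq_norm, hsplit_k x, hsplit_k x₀]
  have hexp : ((∫ y in S, k f x y) + ∫ y in T, k f x y)
      - ((∫ y in S, k f x₀ y) + ∫ y in T, k f x₀ y)
      = ((∫ y in S, k f x y) - (∫ y in S, k f x₀ y))
        + ((∫ y in T, k f x y) - ∫ y in T, k f x₀ y) := by abel
  rw [hexp]
  calc ‖((∫ y in S, k f x y) - (∫ y in S, k f x₀ y))
        + ((∫ y in T, k f x y) - ∫ y in T, k f x₀ y)‖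
      ≤ ‖(∫ y in S, k f x y) - (∫ y in S, k f x₀ y)‖
        + ‖(∫ y in T, k f x y) - ∫ y in T, k f x₀ y‖ := norm_add_le _ _
    _ ≤ (‖∫ y in S, k f x y‖ + ‖∫ y in S, k f x₀ y‖)
        + ‖(∫ y in T, k f x y) - ∫ y in T, k f x₀ y‖ := by
        have := norm_sub_le (∫ y in S, k f x y) (∫ y in S, k f x₀ y)
        linarith
    _ < ε := by
        rw [dist_eq_norm] at hfx
        linarith

end LogPot

end LogPot


/-- **Theorem.** The logarithmic Newtonian potential
`u(x) = ∫_Ω log ‖x − y‖ f(y) dA_y` of a bounded measurable density `f` over a bounded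
measurable set `Ω ⊂ ℝ²` is continuously differentiable on all of `ℝ²`, and its
gradient is obtained by differentiating under the integral sign:
`∇u(x) = ∫_Ω (x − y)/‖x − y‖² · f(y) dA_y` (in particular the normal derivative takes
equal limiting values from inside and outside of `Ω` at every boundary point). -/
theorem log_potential_contDiffOne_gradient
    (Ω : Set (EuclideanSpace ℝ (Fin 2)))
    (hΩmeas : MeasurableSet Ω) (hΩbdd : Bornology.IsBounded Ω)
    (f : EuclideanSpace ℝ (Fin 2) → ℝ)
    (hfmeas : Measurable f) (hfbdd : ∃ C : ℝ, ∀ y, |f y| ≤ C)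
    (u : EuclideanSpace ℝ (Fin 2) → ℝ)
    (hu : ∀ x, u x = ∫ y in Ω, Real.log ‖x - y‖ * f y ∂volume) :
    ContDiff ℝ 1 u ∧
      ∀ x, HasGradientAt u
        (∫ y in Ω, (f y / ‖x - y‖ ^ 2) • (x - y) ∂volume) x := by
  obtain ⟨C, hC⟩ := hfbdd
  have huf : u = fun x => ∫ y in Ω, Real.log ‖x - y‖ * f y := funext hu
  have hkk : ∀ x : EuclideanSpace ℝ (Fin 2),
      (∫ y in Ω, (f y / ‖x - y‖ ^ 2) • (x - y) ∂volume) = ∫ y in Ω, LogPot.k f x y := by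
    intro x; rfl
  have hder : ∀ x, HasFDerivAt u (innerSL ℝ (∫ y in Ω, LogPot.k f x y)) x := by
    intro x
    rw [huf]
    exact LogPot.hasFDerivAt_potential hΩmeas hΩbdd hfmeas hC x
  constructor
  · rw [contDiff_one_iff_fderiv]
    refine ⟨fun x => (hder x).differentiableAt, ?_⟩
    have hfd : (fderiv ℝ u) = fun x => innerSL ℝ (∫ y in Ω, LogPot.k f x y) :=
      funext fun x => (hder x).fderiv
    rw [hfd]
    exact (innerSL ℝ).continuous.comp (LogPot.continuous_v hΩmeas hΩbdd hfmeas hC)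
  · intro x
    rw [hasGradientAt_iff_hasFDerivAt, hkk x]
    exact hder x
end

section
/- Let a, b ∈ ℝ with b ≠ 0, and define H : [−1, 1] → ℝ by H(x) = log ‖(a, b) − ((x + 1)/2, 0)‖ = (1/2)·log( (a − (x + 1)/2)² + b² ). Let ρ > 1 and suppose the complex point 2(a + ib) − 1 lies in the open Bernstein ellipse E_ρ. Then H cannot be approximated by polynomials at the geometric rate ρ^{−n}: there do not exist a constant C > 0 and, for every integer n ≥ 0, a real polynomial qₙ of degree at most n, such that sup_{x ∈ [−1,1]} |H(x) − qₙ(x)| ≤ C·ρ^{−n} for all n. -/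
open Set Complex

section BernsteinAux

open Polynomial Filter Topology

lemma bern_growth (p : Polynomial ℂ) (n : ℕ) (hdeg : p.natDegree ≤ n)
    (M : ℝ) (hM : ∀ x : ℝ, x ∈ Icc (-1:ℝ) 1 → ‖p.eval (x:ℂ)‖ ≤ M)
    (z : ℂ) (hz1 : 1 ≤ ‖z‖) :
    ‖p.eval ((z + z⁻¹)/2)‖ ≤ M * ‖z‖ ^ n := by
  have hz0 : z ≠ 0 := by
    intro h; rw [h] at hz1; simp at hz1; linarith
  set Q : Polynomial ℂ :=
    ∑ k ∈ Finset.range (n+1), Polynomial.C (p.coeff k / 2^k) * (X^(n-k) * (X^2+1)^k) with hQdef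
  have key : ∀ u : ℂ, u ≠ 0 → Q.eval u = u^n * p.eval ((u + u⁻¹)/2) := by
    intro u hu
    have hpe : p.eval ((u+u⁻¹)/2) = ∑ k ∈ Finset.range (n+1), p.coeff k * ((u+u⁻¹)/2)^k :=
      Polynomial.eval_eq_sum_range' (lt_of_le_of_lt hdeg (Nat.lt_succ_self n)) _
    rw [hQdef, Polynomial.eval_finset_sum, hpe, Finset.mul_sum]
    refine Finset.sum_congr rfl fun k hk => ?_
    have hk' : k ≤ n := Nat.lt_succ_iff.mp (Finset.mem_range.mp hk)
    simp only [Polynomial.eval_mul, Polynomial.eval_C, Polynomial.eval_pow,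
      Polynomial.eval_add, Polynomial.eval_X, Polynomial.eval_one]
    have h1 : u^2 + 1 = u * (u + u⁻¹) := by
      field_simp
    rw [h1, mul_pow, div_pow]
    rw [show p.coeff k / 2 ^ k * (u ^ (n - k) * (u ^ k * (u + u⁻¹) ^ k))
        = p.coeff k * (u ^ (n-k) * u ^ k) * ((u + u⁻¹) ^ k / 2 ^ k) by ring,
      ← pow_add, Nat.sub_add_cancel hk']
    ring
  have circ : ∀ u : ℂ, ‖u‖ = 1 → ‖Q.eval u‖ ≤ M := by
    intro u hu
    have hu0 : u ≠ 0 := by intro h; rw [h] at hu; simp at hu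
    have hre : (u + u⁻¹)/2 = ((u.re : ℝ) : ℂ) := by
      rw [Complex.inv_eq_conj (by exact hu), Complex.add_conj]
      push_cast; ring
    have hm : u.re ∈ Icc (-1:ℝ) 1 := by
      have := Complex.abs_re_le_norm u
      rw [hu] at this
      constructor <;> cases abs_le.mp this <;> linarith
    rw [key u hu0, hre]
    rw [norm_mul, norm_pow, hu, one_pow, one_mul]
    exact hM _ hm
  have disk : ∀ u : ℂ, ‖u‖ ≤ 1 → ‖Q.eval u‖ ≤ M := by
    intro u hu
    have hd : DiffContOnCl ℂ (fun w => Q.eval w) (Metric.ball (0:ℂ) 1) :=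
      (Q.differentiable).diffContOnCl
    refine Complex.norm_le_of_forall_mem_frontier_norm_le Metric.isBounded_ball hd ?_ ?_
    · intro w hw
      rw [frontier_ball (0:ℂ) one_ne_zero] at hw
      have : ‖w‖ = 1 := by
        simpa using (mem_sphere_zero_iff_norm.mp hw)
      exact circ w this
    · rw [closure_ball (0:ℂ) one_ne_zero]
      simpa using hu
  -- evaluate at z⁻¹
  have hzinv : ‖z⁻¹‖ ≤ 1 := by
    rw [norm_inv]
    exact inv_le_one_of_one_le₀ hz1
  have hk := key z⁻¹ (inv_ne_zero hz0)
  rw [inv_inv] at hk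
  have hrw : p.eval ((z + z⁻¹)/2) = z^n * Q.eval z⁻¹ := by
    rw [hk, ← mul_assoc, ← mul_pow, mul_inv_cancel₀ hz0, one_pow, one_mul, add_comm]
  rw [hrw, norm_mul, norm_pow, mul_comm]
  exact mul_le_mul (disk _ hzinv) le_rfl (by positivity) (by
    rcases hM 0 (by norm_num) with h
    exact le_trans (norm_nonneg _) h)

noncomputable def Jk (z : ℂ) : ℂ := (z + z⁻¹) / 2

lemma Jk_eq_iff {u v : ℂ} (hu : u ≠ 0) (hv : v ≠ 0) (h : Jk u = Jk v) :
    u = v ∨ u * v = 1 := by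
  unfold Jk at h
  have h2 : (u - v) * (u * v - 1) = 0 := by
    field_simp at h
    linear_combination h
  rcases mul_eq_zero.mp h2 with h | h
  · left; exact sub_eq_zero.mp h
  · right; linear_combination h

lemma Jk_inv (z : ℂ) : Jk z⁻¹ = Jk z := by
  unfold Jk; rw [inv_inv, add_comm]

lemma Jk_analyticAt {z : ℂ} (hz : z ≠ 0) : AnalyticAt ℂ Jk z := by
  unfold Jk
  exact ((analyticAt_id.add (analyticAt_id.inv hz)).div analyticAt_const (by norm_num))

lemma Jk_image_open {A : Set ℂ} (hA : IsOpen A) (h0 : (0:ℂ) ∉ A) : IsOpen (Jk '' A) := by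
  rw [isOpen_iff_mem_nhds]
  rintro w ⟨z, hzA, rfl⟩
  have hz0 : z ≠ 0 := fun h => h0 (h ▸ hzA)
  rcases (Jk_analyticAt hz0).eventually_constant_or_nhds_le_map_nhds with hc | hopen
  · exfalso
    obtain ⟨r, hr0, hball⟩ := Metric.eventually_nhds_iff_ball.mp hc
    set r' := min r (‖z‖) with hr'
    have hr'0 : 0 < r' := lt_min hr0 (norm_pos_iff.mpr hz0)
    have hmem : ∀ ε : ℝ, 0 < ε → ε < r' → z + ε = z⁻¹ := by
      intro ε hε hεr
      have hball' : (z + ε) ∈ Metric.ball z r := by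
        simp only [Metric.mem_ball, dist_eq_norm, add_sub_cancel_left]
        rw [Complex.norm_real]
        rw [Real.norm_eq_abs, abs_of_pos hε]
        exact hεr.trans_le (min_le_left _ _)
      have hne : (z + ε) ≠ 0 := by
        intro h
        have : ‖z‖ = ε := by
          have := congrArg norm (eq_neg_of_add_eq_zero_left h)
          simpa [abs_of_pos hε] using this
        have : ‖z‖ < r' := this ▸ hεr
        exact absurd (min_le_right r (‖z‖)) (not_le.mpr this)
      rcases Jk_eq_iff hne hz0 (hball _ hball') with h | h
      · exact absurd (by simpa using congrArg (· - z) h) (Complex.ofReal_ne_zero.mpr hε.ne')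
      · field_simp
        linear_combination h
    have h1 := hmem (r'/2) (by linarith) (by linarith)
    have h2 := hmem (r'/3) (by linarith) (by linarith)
    have : ((r'/2 : ℝ) : ℂ) = ((r'/3 : ℝ) : ℂ) := by
      have := h1.trans h2.symm
      simpa using this
    rw [Complex.ofReal_inj] at this
    linarith
  · exact hopen (Filter.image_mem_map (hA.mem_nhds hzA))

lemma bernstein_eq_image (ρ : ℝ) (hρ : 1 < ρ) :
    bernsteinEllipse ρ = Jk '' {z : ℂ | ρ⁻¹ < ‖z‖ ∧ ‖z‖ < ρ} := by
  ext w
  constructor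
  · rintro ⟨z, h1, h2, rfl⟩
    exact ⟨z, ⟨lt_of_lt_of_le (by rw [inv_lt_one_iff₀]; right; exact hρ) h1, h2⟩, rfl⟩
  · rintro ⟨z, ⟨h1, h2⟩, rfl⟩
    have hρ0 : (0:ℝ) < ρ := lt_trans one_pos hρ
    have hz0 : z ≠ 0 := by
      intro h; rw [h] at h1; simp at h1
      exact absurd h1 (not_lt.mpr hρ0.le)
    rcases le_or_gt 1 (‖z‖) with h | h
    · exact ⟨z, h, h2, rfl⟩
    · refine ⟨z⁻¹, ?_, ?_, (Jk_inv z).symm⟩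
      · rw [norm_inv, one_le_inv_iff₀]
        exact ⟨norm_pos_iff.mpr hz0, h.le⟩
      · rw [norm_inv, inv_lt_comm₀ (norm_pos_iff.mpr hz0) hρ0]
        exact h1

lemma bernstein_isOpen (ρ : ℝ) (hρ : 1 < ρ) : IsOpen (bernsteinEllipse ρ) := by
  rw [bernstein_eq_image ρ hρ]
  have hρ0 : (0:ℝ) < ρ := lt_trans one_pos hρ
  refine Jk_image_open ?_ ?_
  · have : {z : ℂ | ρ⁻¹ < ‖z‖ ∧ ‖z‖ < ρ}
        = (fun z : ℂ => ‖z‖) ⁻¹' (Ioo ρ⁻¹ ρ) := rfl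
    rw [this]
    exact isOpen_Ioo.preimage continuous_norm
  · simp only [mem_setOf_eq, norm_zero, not_and]
    intro h
    exact absurd h (not_lt.mpr (inv_pos.mpr hρ0).le)

lemma bernstein_preconnected (ρ : ℝ) (hρ : 1 < ρ) : IsPreconnected (bernsteinEllipse ρ) := by
  have himg : bernsteinEllipse ρ =
      (fun p : ℝ × ℝ => Jk (p.1 * Complex.exp (p.2 * Complex.I))) '' (Ico (1:ℝ) ρ ×ˢ univ) := by
    ext w
    constructor
    · rintro ⟨z, h1, h2, rfl⟩
      refine ⟨⟨‖z‖, Complex.arg z⟩, ⟨⟨h1, h2⟩, trivial⟩, ?_⟩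
      simp only [Jk]
      rw [Complex.norm_mul_exp_arg_mul_I]
    · rintro ⟨⟨t, θ⟩, ⟨⟨ht1, ht2⟩, -⟩, rfl⟩
      refine ⟨t * Complex.exp (θ * Complex.I), ?_, ?_, rfl⟩
      · rw [norm_mul, Complex.norm_exp_ofReal_mul_I, mul_one, Complex.norm_real, Real.norm_eq_abs,
          abs_of_pos (lt_of_lt_of_le one_pos ht1)]
        exact ht1
      · rw [norm_mul, Complex.norm_exp_ofReal_mul_I, mul_one, Complex.norm_real, Real.norm_eq_abs,
          abs_of_pos (lt_of_lt_of_le one_pos ht1)]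
        exact ht2
  rw [himg]
  apply IsPreconnected.image
  · exact isPreconnected_Ico.prod isPreconnected_univ
  · apply ContinuousOn.div
    · apply ContinuousOn.add
      · fun_prop
      · apply ContinuousOn.inv₀
        · fun_prop
        · rintro ⟨t, θ⟩ ⟨⟨ht1, -⟩, -⟩
          simp only
          intro h
          rcases mul_eq_zero.mp h with h | h
          · rw [Complex.ofReal_eq_zero] at h; linarith
          · exact Complex.exp_ne_zero _ h
    · fun_prop
    · intro _ _; norm_num

lemma real_mem_bernstein (ρ : ℝ) (hρ : 1 < ρ) (x : ℝ) (hx : x ∈ Icc (-1:ℝ) 1) :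
    ((x:ℂ)) ∈ bernsteinEllipse ρ := by
  set θ := Real.arccos x with hθ
  refine ⟨Complex.exp (θ * Complex.I), ?_, ?_, ?_⟩
  · rw [Complex.norm_exp_ofReal_mul_I]
  · rw [Complex.norm_exp_ofReal_mul_I]; exact hρ
  · rw [← Complex.exp_neg]
    have : (Complex.exp (θ * Complex.I) + Complex.exp (-(θ * Complex.I))) / 2
        = Complex.cos θ := by
      rw [Complex.cos]
      ring_nf
    rw [this, ← Complex.ofReal_cos]
    rw [hθ, Real.cos_arccos hx.1 hx.2]

end BernsteinAux

open Polynomial Filter Topology in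
/-- **Theorem.** Let `H(x) = log ‖(a,b) − ((x+1)/2, 0)‖ = ½ log((a − (x+1)/2)² + b²)`
with `b ≠ 0`, and suppose the complex point `2(a + ib) − 1` lies in the open
Bernstein ellipse `E_ρ` (`ρ > 1`).  Then `H` cannot be approximated by polynomials
at the geometric rate `ρ^{−n}`: there is no constant `C > 0` and family of
polynomials `qₙ` of degree at most `n` with
`sup_{x∈[−1,1]} |H(x) − qₙ(x)| ≤ C·ρ^{−n}` for every `n`. -/
theorem no_geometric_polynomial_approx_of_singularity_in_bernsteinEllipse
    (a b : ℝ) (hb : b ≠ 0) (ρ : ℝ) (hρ : 1 < ρ)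
    (hsing : (2 * (a + b * Complex.I) - 1 : ℂ) ∈ bernsteinEllipse ρ)
    (H : ℝ → ℝ)
    (hH : ∀ x : ℝ, H x = (1 / 2) * Real.log ((a - (x + 1) / 2) ^ 2 + b ^ 2)) :
    ¬ ∃ C : ℝ, 0 < C ∧ ∀ n : ℕ, ∃ q : Polynomial ℝ, q.degree ≤ n ∧
      ∀ x ∈ Icc (-1 : ℝ) 1, |H x - q.eval x| ≤ C * ρ ^ (-(n : ℤ)) := by
  rintro ⟨C, hC, hq⟩
  choose q hdeg hbound using hq
  have hρ0 : (0:ℝ) < ρ := lt_trans one_pos hρ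
  set U := bernsteinEllipse ρ with hUdef
  have hUopen := bernstein_isOpen ρ hρ
  have hUconn := bernstein_preconnected ρ hρ
  set f : ℕ → ℂ → ℂ := fun n w => ((q n).map (algebraMap ℝ ℂ)).eval w with hfdef
  have hfreal : ∀ (n : ℕ) (x : ℝ), f n (x:ℂ) = (((q n).eval x : ℝ) : ℂ) := by
    intro n x
    simp only [hfdef, Polynomial.eval_map]
    exact Polynomial.eval₂_at_apply (algebraMap ℝ ℂ) x
  have hrate : ∀ n : ℕ, C * ρ ^ (-(n:ℤ)) = C * (ρ⁻¹)^n := by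
    intro n
    rw [zpow_neg, zpow_natCast, inv_pow]
  -- key geometric estimate on the sub-ellipse of parameter s
  have est : ∀ s : ℝ, 1 < s → s < ρ → ∀ y ∈ bernsteinEllipse s, ∀ n : ℕ,
      dist (f n y) (f (n+1) y) ≤ (2*C*s) * (s/ρ)^n := by
    intro s hs1 hsρ y hy n
    obtain ⟨z, hz1, hzs, rfl⟩ := hy
    rw [dist_eq_norm]
    have hsub : f n ((z+z⁻¹)/2) - f (n+1) ((z+z⁻¹)/2)
        = ((q n - q (n+1)).map (algebraMap ℝ ℂ)).eval ((z+z⁻¹)/2) := by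
      simp [hfdef, Polynomial.map_sub]
    rw [hsub]
    have hdeg' : ((q n - q (n+1)).map (algebraMap ℝ ℂ)).natDegree ≤ n+1 := by
      apply Polynomial.natDegree_le_iff_degree_le.mpr
      refine le_trans (Polynomial.degree_map_le) ?_
      refine le_trans (Polynomial.degree_sub_le _ _) ?_
      rw [sup_le_iff]
      constructor
      · exact le_trans (hdeg n) (by exact_mod_cast Nat.cast_le.mpr (Nat.le_succ n))
      · exact hdeg (n+1)
    have hM : ∀ x : ℝ, x ∈ Icc (-1:ℝ) 1 →
        ‖((q n - q (n+1)).map (algebraMap ℝ ℂ)).eval (x:ℂ)‖ ≤ 2*C*(ρ⁻¹)^n := by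
      intro x hx
      have : ((q n - q (n+1)).map (algebraMap ℝ ℂ)).eval (x:ℂ)
          = (((q n - q (n+1)).eval x : ℝ) : ℂ) := by
        rw [Polynomial.eval_map]
        exact Polynomial.eval₂_at_apply (algebraMap ℝ ℂ) x
      rw [this, Complex.norm_real, Real.norm_eq_abs, Polynomial.eval_sub]
      have h1 := hbound n x hx
      have h2 := hbound (n+1) x hx
      rw [hrate] at h1 h2
      have hmono : C * (ρ⁻¹)^(n+1) ≤ C * (ρ⁻¹)^n := by
        apply mul_le_mul_of_nonneg_left _ hC.le
        apply pow_le_pow_of_le_one (by positivity) (inv_le_one_of_one_le₀ hρ.le) (Nat.le_succ n)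
      calc |(q n).eval x - (q (n+1)).eval x|
          = |((q n).eval x - H x) + (H x - (q (n+1)).eval x)| := by ring_nf
        _ ≤ |(q n).eval x - H x| + |H x - (q (n+1)).eval x| := abs_add_le _ _
        _ ≤ C * (ρ⁻¹)^n + C * (ρ⁻¹)^(n+1) := by
            rw [abs_sub_comm]
            exact add_le_add h1 h2
        _ ≤ C * (ρ⁻¹)^n + C * (ρ⁻¹)^n := by linarith
        _ = 2*C*(ρ⁻¹)^n := by ring
    have hbg := bern_growth _ (n+1) hdeg' _ hM z hz1
    have habs : ‖z‖ ^ (n+1) ≤ s^(n+1) :=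
      pow_le_pow_left₀ (norm_nonneg z) hzs.le _
    calc ‖((q n - q (n+1)).map (algebraMap ℝ ℂ)).eval ((z+z⁻¹)/2)‖
        ≤ (2*C*(ρ⁻¹)^n) * ‖z‖ ^ (n+1) := hbg
      _ ≤ (2*C*(ρ⁻¹)^n) * s^(n+1) := by
          apply mul_le_mul_of_nonneg_left habs (by positivity)
      _ = (2*C*s) * (s/ρ)^n := by
          rw [div_pow, pow_succ]
          field_simp
          rw [← mul_pow]
          simp [hρ0.ne']
  have hsubset : ∀ s : ℝ, s ≤ ρ → bernsteinEllipse s ⊆ U := by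
    rintro s hs w ⟨z, h1, h2, rfl⟩
    exact ⟨z, h1, lt_of_lt_of_le h2 hs, rfl⟩
  -- choice of parameter for a given point
  have hparam : ∀ y ∈ U, ∃ s : ℝ, 1 < s ∧ s < ρ ∧ y ∈ bernsteinEllipse s := by
    rintro y ⟨z, h1, h2, rfl⟩
    refine ⟨(‖z‖ + ρ)/2, by linarith, by linarith, z, h1, by linarith, rfl⟩
  set F : ℂ → ℂ := fun y => limUnder atTop (fun n => f n y) with hFdef
  have hconv : ∀ y ∈ U, Tendsto (fun n => f n y) atTop (𝓝 (F y)) := by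
    intro y hy
    obtain ⟨s, hs1, hsρ, hys⟩ := hparam y hy
    have hr1 : s/ρ < 1 := (div_lt_one hρ0).mpr hsρ
    exact (cauchySeq_of_le_geometric (s/ρ) (2*C*s) hr1 (est s hs1 hsρ y hys)).tendsto_limUnder
  have hdistlim : ∀ s : ℝ, 1 < s → s < ρ → ∀ y ∈ bernsteinEllipse s, ∀ n : ℕ,
      dist (f n y) (F y) ≤ (2*C*s) * (s/ρ)^n / (1 - s/ρ) := by
    intro s hs1 hsρ y hy n
    have hr1 : s/ρ < 1 := (div_lt_one hρ0).mpr hsρ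
    exact dist_le_of_le_geometric_of_tendsto (s/ρ) (2*C*s) hr1 (est s hs1 hsρ y hy)
      (hconv y (hsubset s hsρ.le hy)) n
  have hTLU : TendstoLocallyUniformlyOn f F atTop U := by
    rw [Metric.tendstoLocallyUniformlyOn_iff]
    intro ε hε x hx
    obtain ⟨s, hs1, hsρ, hxs⟩ := hparam x hx
    refine ⟨bernsteinEllipse s, ?_, ?_⟩
    · exact mem_nhdsWithin_of_mem_nhds ((bernstein_isOpen s hs1).mem_nhds hxs)
    · have hr0 : (0:ℝ) ≤ s/ρ := by positivity
      have hr1 : s/ρ < 1 := (div_lt_one hρ0).mpr hsρ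
      have htend : Tendsto (fun n : ℕ => (2*C*s) * (s/ρ)^n / (1 - s/ρ)) atTop (𝓝 0) := by
        have := (tendsto_pow_atTop_nhds_zero_of_lt_one hr0 hr1).const_mul (2*C*s)
        rw [mul_zero] at this
        have := this.div_const (1 - s/ρ)
        rwa [zero_div] at this
      filter_upwards [htend.eventually (gt_mem_nhds hε)] with n hn y hy
      calc dist (F y) (f n y) = dist (f n y) (F y) := dist_comm _ _
        _ ≤ (2*C*s) * (s/ρ)^n / (1 - s/ρ) := hdistlim s hs1 hsρ y hy n
        _ < ε := hn
  have hFdiff : DifferentiableOn ℂ F U :=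
    hTLU.differentiableOn
      (Eventually.of_forall fun n => (Polynomial.differentiable _).differentiableOn) hUopen
  have hFanalytic : AnalyticOnNhd ℂ F U := hFdiff.analyticOnNhd hUopen
  have hderivAn : AnalyticOnNhd ℂ (deriv F) U := hFanalytic.deriv
  have hFreal : ∀ x : ℝ, x ∈ Icc (-1:ℝ) 1 → F (x:ℂ) = ((H x : ℝ) : ℂ) := by
    intro x hx
    have hmem := real_mem_bernstein ρ hρ x hx
    have h1 : Tendsto (fun n => (q n).eval x) atTop (𝓝 (H x)) := by
      rw [tendsto_iff_dist_tendsto_zero]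
      apply squeeze_zero (fun _ => dist_nonneg) (g := fun n => C * (ρ⁻¹)^n)
      · intro n
        rw [Real.dist_eq, abs_sub_comm, ← hrate n]
        exact hbound n x hx
      · have := (tendsto_pow_atTop_nhds_zero_of_lt_one (by positivity)
          (inv_lt_one_of_one_lt₀ hρ)).const_mul C
        rwa [mul_zero] at this
    have h2 : Tendsto (fun n => f n (x:ℂ)) atTop (𝓝 ((H x:ℝ):ℂ)) := by
      have := (Complex.continuous_ofReal.tendsto (H x)).comp h1
      convert this using 2
      exact hfreal _ x
    exact tendsto_nhds_unique (hconv _ hmem) h2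
  -- derivative of H
  have hb2 : 0 < b^2 := lt_of_le_of_ne (sq_nonneg b) (Ne.symm (pow_ne_zero 2 hb))
  have hHd : ∀ x : ℝ,
      HasDerivAt H (-(1/2) * (a - (x+1)/2) / ((a-(x+1)/2)^2 + b^2)) x := by
    intro x
    have hv0 : (a-(x+1)/2)^2 + b^2 ≠ 0 := by nlinarith [sq_nonneg (a-(x+1)/2)]
    have hinner : HasDerivAt (fun t:ℝ => a - (t+1)/2) (-(1/2)) x := by
      simpa using (((hasDerivAt_id x).add_const 1).div_const 2).const_sub a
    have hv : HasDerivAt (fun t:ℝ => (a-(t+1)/2)^2 + b^2)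
        ((2:ℕ) * (a-(x+1)/2)^1 * (-(1/2))) x := (hinner.pow 2).add_const (b^2)
    have hlog := (hv.log hv0).const_mul (1/2:ℝ)
    have hHfun : H = fun t => (1/2) * Real.log ((a-(t+1)/2)^2 + b^2) := funext hH
    rw [hHfun]
    refine hlog.congr_deriv ?_
    rw [pow_one]
    push_cast
    ring
  -- the auxiliary analytic function Φ
  set Φ : ℂ → ℂ := fun w =>
    (((a:ℂ) - (w+1)/2)^2 + ((b:ℂ))^2) * deriv F w + (1/2) * ((a:ℂ) - (w+1)/2) with hΦdef
  have hd1 : Differentiable ℂ (fun w : ℂ => ((a:ℂ) - (w+1)/2)) := by fun_prop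
  have hΦdiff : DifferentiableOn ℂ Φ U := by
    apply DifferentiableOn.add
    · exact (((hd1.pow 2).differentiableOn.add (differentiableOn_const _)).mul
        hderivAn.differentiableOn)
    · exact (differentiable_const _ |>.mul hd1).differentiableOn
  have hΦanalytic : AnalyticOnNhd ℂ Φ U := hΦdiff.analyticOnNhd hUopen
  -- Φ vanishes at real points of (-1,1)
  have hΦ0 : ∀ x : ℝ, x ∈ Ioo (-1:ℝ) 1 → Φ (x:ℂ) = 0 := by
    intro x hx
    have hmemU : ((x:ℂ)) ∈ U := real_mem_bernstein ρ hρ x (Ioo_subset_Icc_self hx)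
    have hFdA : DifferentiableAt ℂ F (x:ℂ) :=
      hFdiff.differentiableAt (hUopen.mem_nhds hmemU)
    have h1 : HasDerivAt (fun t:ℝ => F (t:ℂ)) (deriv F (x:ℂ)) x :=
      hFdA.hasDerivAt.comp_ofReal
    have h2 : HasDerivAt (fun t:ℝ => ((H t : ℝ):ℂ))
        (((-(1/2) * (a - (x+1)/2) / ((a-(x+1)/2)^2 + b^2) : ℝ)):ℂ) x := (hHd x).ofReal_comp
    have heq : (fun t:ℝ => ((H t:ℝ):ℂ)) =ᶠ[𝓝 x] (fun t:ℝ => F (t:ℂ)) := by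
      filter_upwards [isOpen_Ioo.mem_nhds hx] with t ht
      rw [hFreal t (Ioo_subset_Icc_self ht)]
    have h1' : HasDerivAt (fun t:ℝ => ((H t:ℝ):ℂ)) (deriv F (x:ℂ)) x :=
      h1.congr_of_eventuallyEq heq
    have hdF : deriv F ((x:ℝ):ℂ)
        = (((-(1/2) * (a - (x+1)/2) / ((a-(x+1)/2)^2 + b^2) : ℝ)):ℂ) := h1'.unique h2
    have hv0 : ((a-(x+1)/2)^2 + b^2 : ℝ) ≠ 0 := by nlinarith [sq_nonneg (a-(x+1)/2)]
    rw [hΦdef]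
    simp only
    rw [hdF]
    have hcast : ((a:ℂ) - ((x:ℂ)+1)/2) = (((a - (x+1)/2 : ℝ)):ℂ) := by push_cast; ring
    rw [hcast]
    rw [← Complex.ofReal_pow, ← Complex.ofReal_pow, ← Complex.ofReal_add]
    rw [← Complex.ofReal_mul]
    rw [show ((1:ℂ)/2) = (((1:ℝ)/2 : ℝ):ℂ) by norm_num, ← Complex.ofReal_mul,
      ← Complex.ofReal_add]
    rw [show ((0:ℂ)) = (((0:ℝ)):ℂ) by norm_num]
    rw [Complex.ofReal_inj]
    field_simp
    ring
  -- identity theorem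
  have h0U : ((0:ℝ):ℂ) ∈ U := real_mem_bernstein ρ hρ 0 (by norm_num)
  have hfreq : ∃ᶠ w in 𝓝[≠] (((0:ℝ):ℂ)), Φ w = (fun _ => (0:ℂ)) w := by
    have hseq : Tendsto (fun n : ℕ => ((1/((n:ℝ)+2) : ℝ):ℂ)) atTop (𝓝[≠] (((0:ℝ):ℂ))) := by
      apply tendsto_nhdsWithin_of_tendsto_nhds_of_eventually_within
      · have h1 : Tendsto (fun n : ℕ => ((n:ℝ)+2)) atTop atTop :=
          tendsto_atTop_add_const_right atTop 2 tendsto_natCast_atTop_atTop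
        have hre : Tendsto (fun n : ℕ => (1/((n:ℝ)+2) : ℝ)) atTop (𝓝 0) := by
          simpa [one_div, Function.comp_def] using tendsto_inv_atTop_zero.comp h1
        have h2 := (Complex.continuous_ofReal.tendsto 0).comp hre
        rw [Complex.ofReal_zero]
        simpa [Function.comp_def] using h2
      · apply Eventually.of_forall
        intro n
        simp only [mem_compl_iff, mem_singleton_iff]
        rw [Complex.ofReal_zero]
        intro h
        rw [Complex.ofReal_eq_zero] at h
        have : (0:ℝ) < 1/((n:ℝ)+2) := by positivity
        linarith [h ▸ this]
    refine hseq.frequently (Eventually.frequently (Eventually.of_forall fun n => ?_))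
    have hmem : (1/((n:ℝ)+2) : ℝ) ∈ Ioo (-1:ℝ) 1 := by
      constructor
      · have : (0:ℝ) < 1/((n:ℝ)+2) := by positivity
        linarith
      · rw [div_lt_one (by positivity)]
        have : (0:ℝ) ≤ (n:ℝ) := Nat.cast_nonneg n
        linarith
    exact hΦ0 _ hmem
  have hEq : EqOn Φ (fun _ => (0:ℂ)) U :=
    hΦanalytic.eqOn_of_preconnected_of_frequently_eq analyticOnNhd_const hUconn h0U hfreq
  have hval : Φ (2 * (↑a + ↑b * Complex.I) - 1) = 0 := hEq hsing
  rw [hΦdef] at hval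
  simp only at hval
  have hu : ((a:ℂ) - ((2*((a:ℂ)+(b:ℂ)*Complex.I)-1)+1)/2) = -(b:ℂ)*Complex.I := by ring
  rw [hu] at hval
  have hz : ((-(b:ℂ)*Complex.I)^2 + ((b:ℂ))^2) = 0 := by
    rw [mul_pow, Complex.I_sq]
    ring
  rw [hz, zero_mul, zero_add] at hval
  -- hval : 1/2 * (-(b:ℂ)*I) = 0
  have hbC : (b:ℂ) = 0 := by
    have hI := Complex.I_ne_zero
    field_simp at hval
    rw [mul_zero, neg_eq_zero] at hval
    rcases mul_eq_zero.mp hval with h | h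
    · exact h
    · exact absurd h Complex.I_ne_zero
  exact hb (Complex.ofReal_eq_zero.mp hbC)
end
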